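/- arXiv:2312.00704 — 6 statements merged into one kernel-verified Lean document; each statement's English description precedes it below -/
import Mathlib

section
/- For every integer k ≥ 1, every real λ > 0, and every integer n ≥ 1, the probability mass function of the Poisson distribution of order k satisfies the recurrence P_n(k,λ) = (λ/n) · Σ_{j=1}^{min(n,k)} j · P_{n−j}(k,λ). -/
/-!
Encode a partition of `n` into parts of size at most `k` by its multiplicity vector
`f : Fin k → ℕ` (`f j` parts equal to `j + 1`), so that `P_n = e^{-kλ} Sₙ` with
`Sₙ = ∑_f term λ f` and `term λ f = ∏ⱼ λ^{f j} / (f j)!`. Counting parts by size gives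
`n · term λ f = ∑ⱼ (j + 1) · f j · term λ f`, and adding one part `j + 1` is a bijection from
the vectors of `m` onto the vectors of `m + j + 1` with `f j ≠ 0`, under which
`f j · term λ f` becomes `λ · term λ g`. Summing, `n Sₙ = λ ∑ⱼ (j + 1) S_{n-(j+1)}`.
-/

/-- Probability mass function of the Poisson distribution of order `k` with rate `lam`:
`P_n(k,λ) = e^{-kλ} · Σ_{n₁+2n₂+⋯+k·n_k = n} ∏_{j=1}^k λ^{n_j}/n_j!`. -/
noncomputable def poissonK (k : ℕ) (lam : ℝ) (n : ℕ) : ℝ :=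
  Real.exp (-(k * lam)) *
    ∑ f ∈ Finset.filter (fun f : Fin k → ℕ => ∑ j : Fin k, (j.1 + 1) * f j = n)
        (Fintype.piFinset fun _ : Fin k => Finset.range (n + 1)),
      ∏ j : Fin k, lam ^ f j / (Nat.factorial (f j) : ℝ)

open Finset Nat

namespace PoissonK

variable {k : ℕ}

def weight (f : Fin k → ℕ) : ℕ :=
  ∑ j, (j.1 + 1) * f j

lemma weight_add (f g : Fin k → ℕ) : weight (f + g) = weight f + weight g := by
  simp only [weight, Pi.add_apply, mul_add, sum_add_distrib]

lemma weight_single (j : Fin k) : weight (Pi.single j 1) = j.1 + 1 := by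
  simp [weight, Pi.single_apply]

lemma succ_mul_le_weight (f : Fin k → ℕ) (j : Fin k) : (j.1 + 1) * f j ≤ weight f :=
  single_le_sum (f := fun i : Fin k => (i.1 + 1) * f i) (fun _ _ => Nat.zero_le _) (mem_univ j)

lemma eq_zero_of_weight_lt {f : Fin k → ℕ} {j : Fin k} (h : weight f < j.1 + 1) : f j = 0 := by
  have := succ_mul_le_weight f j
  by_contra hfj
  nlinarith [Nat.pos_of_ne_zero hfj]

variable (k) in
def partitionVectors (n : ℕ) : Finset (Fin k → ℕ) :=
  {f ∈ Fintype.piFinset fun _ : Fin k => range (n + 1) | weight f = n}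

lemma mem_partitionVectors {n : ℕ} {f : Fin k → ℕ} :
    f ∈ partitionVectors k n ↔ weight f = n := by
  simp only [partitionVectors, mem_filter, Fintype.mem_piFinset, mem_range,
    and_iff_right_iff_imp]
  rintro rfl j
  have := succ_mul_le_weight f j
  nlinarith

noncomputable def term (lam : ℝ) (f : Fin k → ℕ) : ℝ :=
  ∏ j, lam ^ f j / (f j)!

lemma poissonK_eq_exp_mul_sum_term (k : ℕ) (lam : ℝ) (n : ℕ) :
    poissonK k lam n = Real.exp (-(k * lam)) * ∑ f ∈ partitionVectors k n, term lam f :=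
  rfl

lemma succ_mul_term_add_single (lam : ℝ) (g : Fin k → ℕ) (j : Fin k) :
    ((g j : ℝ) + 1) * term lam (g + Pi.single j 1) = lam * term lam g := by
  have hrest : ∏ i ∈ univ.erase j, lam ^ (g + Pi.single j 1 : Fin k → ℕ) i /
        ((g + Pi.single j 1 : Fin k → ℕ) i)!
      = ∏ i ∈ univ.erase j, lam ^ g i / (g i)! :=
    prod_congr rfl fun i hi => by simp [ne_of_mem_erase hi]
  rw [term, term, ← mul_prod_erase _ _ (mem_univ j), ← mul_prod_erase _ _ (mem_univ j), hrest]
  simp only [Pi.add_apply, Pi.single_eq_same, factorial_succ, pow_succ, cast_mul, cast_add,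
    cast_one]
  field_simp

lemma sum_mul_term_of_weight_add (lam : ℝ) (j : Fin k) (m : ℕ) :
    ∑ f ∈ partitionVectors k (m + (j.1 + 1)), (f j : ℝ) * term lam f
      = lam * ∑ g ∈ partitionVectors k m, term lam g := by
  rw [← sum_filter_of_ne (p := fun f => f j ≠ 0) fun f _ h hfj => by simp [hfj] at h, mul_sum]
  have single_le {f : Fin k → ℕ} (hfj : f j ≠ 0) : Pi.single j 1 ≤ f := fun i => by
    by_cases hi : i = j
    · subst hi; simpa [Nat.one_le_iff_ne_zero] using hfj
    · simp [hi]
  symm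
  refine sum_nbij' (· + Pi.single j 1) (· - Pi.single j 1) ?_ ?_ ?_ ?_ ?_
  · intro g hg
    simp_all [mem_partitionVectors, weight_add, weight_single]
  · intro f hf
    simp only [mem_filter, mem_partitionVectors] at hf ⊢
    have := weight_add (f - Pi.single j 1) (Pi.single j 1)
    rw [tsub_add_cancel_of_le (single_le hf.2), weight_single] at this
    omega
  · intro g _
    exact add_tsub_cancel_right g _
  · intro f hf
    exact tsub_add_cancel_of_le (single_le (mem_filter.1 hf).2)
  · intro g _
    rw [← succ_mul_term_add_single lam g j]
    simp

lemma sum_mul_term (lam : ℝ) (n : ℕ) (j : Fin k) :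
    ∑ f ∈ partitionVectors k n, (f j : ℝ) * term lam f
      = if j.1 + 1 ≤ n then lam * ∑ g ∈ partitionVectors k (n - (j.1 + 1)), term lam g
        else 0 := by
  split_ifs with h
  · obtain ⟨m, rfl⟩ := Nat.exists_eq_add_of_le' h
    rw [Nat.add_sub_cancel, sum_mul_term_of_weight_add]
  · refine sum_eq_zero fun f hf => ?_
    have hfj : f j = 0 := eq_zero_of_weight_lt (by rw [mem_partitionVectors.1 hf]; omega)
    rw [hfj, cast_zero, zero_mul]

lemma sum_Icc_min_eq_sum_fin {M : Type*} [AddCommMonoid M] (g : ℕ → M) (n k : ℕ) :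
    ∑ j ∈ Icc 1 (min n k), g j = ∑ j : Fin k, if j.1 + 1 ≤ n then g (j.1 + 1) else 0 := by
  rw [Fin.sum_univ_eq_sum_range (fun i => if i + 1 ≤ n then g (i + 1) else 0), range_eq_Ico,
    sum_Ico_add' (fun i => if i ≤ n then g i else 0), ← sum_filter]
  congr 1
  ext j
  simp only [mem_Icc, mem_filter, mem_Ico]
  omega

lemma natCast_mul_sum_term (lam : ℝ) (n : ℕ) :
    (n : ℝ) * ∑ f ∈ partitionVectors k n, term lam f
      = lam * ∑ j ∈ Icc 1 (min n k), (j : ℝ) * ∑ g ∈ partitionVectors k (n - j), term lam g := by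
  have count_parts (f) (hf : f ∈ partitionVectors k n) :
      (n : ℝ) * term lam f = ∑ j : Fin k, ((j.1 : ℝ) + 1) * ((f j : ℝ) * term lam f) := by
    rw [← mem_partitionVectors.1 hf, weight, cast_sum, sum_mul]
    push_cast
    exact sum_congr rfl fun _ _ => by ring
  rw [mul_sum (s := Icc _ _), sum_Icc_min_eq_sum_fin, mul_sum, sum_congr rfl count_parts, sum_comm]
  refine sum_congr rfl fun j _ => ?_
  rw [← mul_sum, sum_mul_term]
  split_ifs <;> push_cast <;> ring

end PoissonK

open PoissonK in
theorem poissonK_pmf_recurrence_general (k : ℕ) (lam : ℝ)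
    (n : ℕ) (hn : 1 ≤ n) :
    poissonK k lam n =
      lam / n * ∑ j ∈ Finset.Icc 1 (min n k), (j : ℝ) * poissonK k lam (n - j) := by
  have hn0 : (n : ℝ) ≠ 0 := Nat.cast_ne_zero.2 (by omega)
  simp only [poissonK_eq_exp_mul_sum_term]
  rw [div_mul_eq_mul_div, eq_div_iff hn0, mul_right_comm, mul_assoc, natCast_mul_sum_term,
    mul_sum, mul_sum, mul_sum]
  exact sum_congr rfl fun _ _ => by ring

/-- Recurrence for the pmf of the Poisson distribution of order `k`:
`P_n = (λ/n) · Σ_{j=1}^{min(n,k)} j · P_{n−j}` for `n ≥ 1`. -/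
theorem poissonK_pmf_recurrence (k : ℕ) (hk : 1 ≤ k) (lam : ℝ) (hlam : 0 < lam)
    (n : ℕ) (hn : 1 ≤ n) :
    poissonK k lam n =
      lam / n * ∑ j ∈ Finset.Icc 1 (min n k), (j : ℝ) * poissonK k lam (n - j) :=
  poissonK_pmf_recurrence_general k lam n hn
end

section
/- For every integer k ≥ 1, every real λ > 0, and every integer n ≥ 1, the n-th factorial moment of the Poisson distribution of order k satisfies the recurrence M_(n)(k,λ) = λ · Σ_{j=1}^{min(n,k)} C(n−1, j−1) · 𝓕_j(k) · M_(n−j)(k,λ), where M_(0)(k,λ) = 1. -/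
open scoped BigOperators

/-- The `n`-th factorial moment `M_(n)(k,λ) = Σ_{m=0}^∞ m·(m−1)⋯(m−n+1)·P_m(k,λ)`,
with the convention `M_(0)(k,λ) = 1`. -/
noncomputable def facMoment (k : ℕ) (lam : ℝ) (n : ℕ) : ℝ :=
  if n = 0 then 1 else ∑' m : ℕ, (Nat.descFactorial m n : ℝ) * poissonK k lam m

/-- `𝓕_j(k) = Σ_{s=j}^k s·(s−1)⋯(s−j+1)`. -/
def fallingSum (k j : ℕ) : ℕ := ∑ s ∈ Finset.Icc j k, Nat.descFactorial s j

open scoped ENNReal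

namespace PK

/-- Weighted degree of a tuple. -/
def S (k : ℕ) (f : Fin k → ℕ) : ℕ := ∑ j : Fin k, (j.1 + 1) * f j

/-- The (unnormalized) weight of a tuple, as an extended nonnegative real. -/
noncomputable def w (k : ℕ) (lam : ℝ) (f : Fin k → ℕ) : ℝ≥0∞ :=
  ENNReal.ofReal (∏ j : Fin k, lam ^ f j / (Nat.factorial (f j) : ℝ))

/-- Unnormalized factorial moments in `ℝ≥0∞`. -/
noncomputable def A (k : ℕ) (lam : ℝ) (n : ℕ) : ℝ≥0∞ :=
  ∑' f : Fin k → ℕ, (Nat.descFactorial (S k f) n : ℝ≥0∞) * w k lam f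

lemma descFactorial_succ' (m t : ℕ) :
    Nat.descFactorial m (t + 1) = m * Nat.descFactorial (m - 1) t := by
  cases m with
  | zero => simp
  | succ m => simpa using Nat.succ_descFactorial_succ m t

lemma descFactorial_add_eq (a b t : ℕ) :
    (a + b).descFactorial t
      = ∑ i ∈ Finset.range (t + 1),
          t.choose i * (a.descFactorial i * b.descFactorial (t - i)) := by
  rw [Nat.descFactorial_eq_factorial_mul_choose, Nat.add_choose_eq,
    Finset.Nat.sum_antidiagonal_eq_sum_range_succ_mk, Finset.mul_sum]
  refine Finset.sum_congr rfl fun i hi => ?_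
  have h : i ≤ t := Nat.lt_succ_iff.mp (Finset.mem_range.mp hi)
  rw [Nat.descFactorial_eq_factorial_mul_choose, Nat.descFactorial_eq_factorial_mul_choose,
    ← Nat.choose_mul_factorial_mul_factorial h]
  ring

lemma sum_range_eq_Icc {M : Type*} [AddCommMonoid M] (k : ℕ) (g : ℕ → M) :
    ∑ s ∈ Finset.range k, g (s + 1) = ∑ s ∈ Finset.Icc 1 k, g s := by
  induction k with
  | zero => simp
  | succ k ih => rw [Finset.sum_range_succ, ih, Finset.sum_Icc_succ_top (by omega)]

lemma sum_descFactorial_fin (k i : ℕ) :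
    ∑ s : Fin k, (s.1 + 1) * Nat.descFactorial s.1 i = fallingSum k (i + 1) := by
  have h1 : ∀ s : Fin k, (s.1 + 1) * Nat.descFactorial s.1 i
      = Nat.descFactorial (s.1 + 1) (i + 1) := fun s =>
    (Nat.succ_descFactorial_succ s.1 i).symm
  simp_rw [h1]
  rw [Fin.sum_univ_eq_sum_range (fun s => Nat.descFactorial (s + 1) (i + 1)) k,
    sum_range_eq_Icc k (fun s => Nat.descFactorial s (i + 1))]
  refine (Finset.sum_subset (fun x hx => ?_) (fun x hx hnx => ?_)).symm
  · simp only [Finset.mem_Icc] at hx ⊢; omega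
  · simp only [Finset.mem_Icc] at hx hnx
    exact Nat.descFactorial_eq_zero_iff_lt.mpr (by omega)

lemma fallingSum_eq_zero {k j : ℕ} (h : k < j) : fallingSum k j = 0 := by
  unfold fallingSum
  rw [Finset.Icc_eq_empty (by omega), Finset.sum_empty]

lemma tsum_pi_prod : ∀ (k : ℕ) (c : ℕ → ℝ≥0∞),
    ∑' f : Fin k → ℕ, ∏ j : Fin k, c (f j) = (∑' a : ℕ, c a) ^ k := by
  intro k
  induction k with
  | zero =>
    intro c
    rw [pow_zero]
    rw [tsum_eq_single (fun _ => 0) (fun f hf => absurd (Subsingleton.elim f _) hf)]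
    simp
  | succ k ih =>
    intro c
    rw [← (Fin.consEquiv (fun _ : Fin (k+1) => ℕ)).tsum_eq]
    rw [ENNReal.tsum_prod']
    have : ∀ (a : ℕ) (g : Fin k → ℕ),
        ∏ j : Fin (k+1), c ((Fin.consEquiv (fun _ : Fin (k+1) => ℕ)) (a, g) j)
          = c a * ∏ j : Fin k, c (g j) := by
      intro a g
      rw [Fin.prod_univ_succ]
      simp [Fin.consEquiv]
    simp_rw [this, ENNReal.tsum_mul_left, ENNReal.tsum_mul_right, ih c, pow_succ]
    ring

lemma mem_piFinset_of_S {k m : ℕ} {f : Fin k → ℕ} (h : ∑ j : Fin k, (j.1 + 1) * f j = m) :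
    f ∈ Fintype.piFinset fun _ : Fin k => Finset.range (m + 1) := by
  rw [Fintype.mem_piFinset]
  intro j
  rw [Finset.mem_range]
  have h1 : (j.1 + 1) * f j ≤ m := h ▸ Finset.single_le_sum
    (f := fun j : Fin k => (j.1 + 1) * f j) (fun _ _ => Nat.zero_le _) (Finset.mem_univ j)
  have : f j ≤ m := le_trans (Nat.le_mul_of_pos_left _ (by omega)) h1
  omega

lemma tsum_fiber (k : ℕ) (lam : ℝ) (F : ℕ → ℝ≥0∞) :
    ∑' f : Fin k → ℕ, F (S k f) * w k lam f
      = ∑' m : ℕ, F m *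
          ∑ f ∈ Finset.filter (fun f : Fin k → ℕ => ∑ j : Fin k, (j.1 + 1) * f j = m)
            (Fintype.piFinset fun _ : Fin k => Finset.range (m + 1)), w k lam f := by
  have key : ∀ m : ℕ,
      F m * ∑ f ∈ Finset.filter (fun f : Fin k → ℕ => ∑ j : Fin k, (j.1 + 1) * f j = m)
            (Fintype.piFinset fun _ : Fin k => Finset.range (m + 1)), w k lam f
        = ∑' f : Fin k → ℕ, if S k f = m then F (S k f) * w k lam f else 0 := by
    intro m
    rw [Finset.mul_sum]
    rw [tsum_eq_sum (s := Finset.filter (fun f : Fin k → ℕ => ∑ j : Fin k, (j.1 + 1) * f j = m)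
            (Fintype.piFinset fun _ : Fin k => Finset.range (m + 1))) (f := fun f =>
            if S k f = m then F (S k f) * w k lam f else 0) ?_]
    · refine Finset.sum_congr rfl fun f hf => ?_
      have hm : S k f = m := (Finset.mem_filter.mp hf).2
      rw [if_pos hm, hm]
    · intro f hf
      rw [if_neg]
      intro hm
      exact hf (Finset.mem_filter.mpr ⟨mem_piFinset_of_S hm, hm⟩)
  simp_rw [key]
  rw [ENNReal.tsum_comm]
  refine tsum_congr fun f => ?_
  rw [tsum_eq_single (S k f) (fun m hm => if_neg (fun h : S k f = m => hm h.symm))]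
  simp

lemma S_update (k : ℕ) (s : Fin k) (g : Fin k → ℕ) :
    S k (Function.update g s (g s + 1)) = S k g + (s.1 + 1) := by
  unfold S
  rw [← Finset.add_sum_erase _ _ (Finset.mem_univ s),
      ← Finset.add_sum_erase _ (fun j : Fin k => (j.1 + 1) * g j) (Finset.mem_univ s)]
  rw [Function.update_self]
  have : ∀ j ∈ Finset.univ.erase s,
      (j.1 + 1) * Function.update g s (g s + 1) j = (j.1 + 1) * g j := by
    intro j hj
    rw [Function.update_of_ne (Finset.ne_of_mem_erase hj)]
  rw [Finset.sum_congr rfl this]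
  ring

lemma w_update (k : ℕ) {lam : ℝ} (hlam : 0 ≤ lam) (s : Fin k) (g : Fin k → ℕ) :
    ((g s + 1 : ℕ) : ℝ≥0∞) * w k lam (Function.update g s (g s + 1))
      = ENNReal.ofReal lam * w k lam g := by
  unfold w
  rw [← ENNReal.ofReal_natCast, ← ENNReal.ofReal_mul (by positivity),
      ← ENNReal.ofReal_mul hlam]
  congr 1
  rw [← Finset.prod_erase_mul _ _ (Finset.mem_univ s),
      ← Finset.prod_erase_mul _ (fun j : Fin k => lam ^ g j / (Nat.factorial (g j) : ℝ))
        (Finset.mem_univ s)]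
  have : ∀ j ∈ Finset.univ.erase s,
      lam ^ (Function.update g s (g s + 1) j) / (Nat.factorial (Function.update g s (g s + 1) j) : ℝ)
        = lam ^ g j / (Nat.factorial (g j) : ℝ) := by
    intro j hj
    rw [Function.update_of_ne (Finset.ne_of_mem_erase hj)]
  rw [Finset.prod_congr rfl this, Function.update_self]
  have hfac : (Nat.factorial (g s + 1) : ℝ) = (g s + 1 : ℕ) * Nat.factorial (g s) := by
    rw [Nat.factorial_succ]; push_cast; ring
  rw [hfac]
  have h1 : (Nat.factorial (g s) : ℝ) ≠ 0 := Nat.cast_ne_zero.mpr (Nat.factorial_ne_zero _)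
  have h2 : ((g s + 1 : ℕ) : ℝ) ≠ 0 := by positivity
  field_simp
  ring

lemma shift (k : ℕ) {lam : ℝ} (hlam : 0 ≤ lam) (s : Fin k) (F : ℕ → ℝ≥0∞) :
    ∑' f : Fin k → ℕ, (f s : ℝ≥0∞) * F (S k f) * w k lam f
      = ENNReal.ofReal lam * ∑' g : Fin k → ℕ, F (S k g + (s.1 + 1)) * w k lam g := by
  set φ : (Fin k → ℕ) → (Fin k → ℕ) := fun g => Function.update g s (g s + 1) with hφ
  have hinj : Function.Injective φ := by
    intro g g' h
    have h2 : ∀ j, Function.update g s (g s + 1) j = Function.update g' s (g' s + 1) j :=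
      fun j => congrFun h j
    funext j
    by_cases hj : j = s
    · subst hj
      have := h2 j
      rw [Function.update_self, Function.update_self] at this
      omega
    · have := h2 j
      rwa [Function.update_of_ne hj, Function.update_of_ne hj] at this
  have hsupp : Function.support (fun f : Fin k → ℕ => (f s : ℝ≥0∞) * F (S k f) * w k lam f)
      ⊆ Set.range φ := by
    intro f hf
    have hfs : f s ≠ 0 := by
      intro h0
      apply hf
      simp [h0]
    refine ⟨Function.update f s (f s - 1), ?_⟩
    funext j
    by_cases hj : j = s
    · subst hj
      simp only [hφ, Function.update_self]
      omega
    · simp only [hφ, Function.update_of_ne hj]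
  rw [← hinj.tsum_eq hsupp]
  rw [← ENNReal.tsum_mul_left]
  refine tsum_congr fun g => ?_
  have h1 : φ g s = g s + 1 := Function.update_self _ _ _
  rw [h1, S_update k s g]
  calc ((g s + 1 : ℕ) : ℝ≥0∞) * F (S k g + (s.1 + 1)) * w k lam (φ g)
      = F (S k g + (s.1 + 1)) * (((g s + 1 : ℕ) : ℝ≥0∞) * w k lam (φ g)) := by ring
    _ = F (S k g + (s.1 + 1)) * (ENNReal.ofReal lam * w k lam g) := by rw [w_update k hlam s g]
    _ = ENNReal.ofReal lam * (F (S k g + (s.1 + 1)) * w k lam g) := by ring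

lemma tsum_exp {lam : ℝ} (h : 0 ≤ lam) :
    ∑' a : ℕ, ENNReal.ofReal (lam ^ a / (Nat.factorial a : ℝ)) = ENNReal.ofReal (Real.exp lam) := by
  rw [← ENNReal.ofReal_tsum_of_nonneg (fun n => by positivity) (Real.summable_pow_div_factorial lam)]
  congr 1
  rw [Real.exp_eq_exp_ℝ, NormedSpace.exp_eq_tsum_div]

lemma A_zero (k : ℕ) {lam : ℝ} (hlam : 0 ≤ lam) :
    A k lam 0 = ENNReal.ofReal (Real.exp (k * lam)) := by
  unfold A
  have hw : ∀ f : Fin k → ℕ, (Nat.descFactorial (S k f) 0 : ℝ≥0∞) * w k lam f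
      = ∏ j : Fin k, ENNReal.ofReal (lam ^ f j / (Nat.factorial (f j) : ℝ)) := by
    intro f
    rw [Nat.descFactorial_zero, Nat.cast_one, one_mul]
    unfold w
    rw [ENNReal.ofReal_prod_of_nonneg (fun j _ => by positivity)]
  simp_rw [hw]
  rw [tsum_pi_prod k (fun a => ENNReal.ofReal (lam ^ a / (Nat.factorial a : ℝ))), tsum_exp hlam,
    ← ENNReal.ofReal_pow (Real.exp_nonneg lam), ← Real.exp_nat_mul]

lemma A_rec (k : ℕ) {lam : ℝ} (hlam : 0 ≤ lam) (t : ℕ) :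
    A k lam (t + 1) = ENNReal.ofReal lam * ∑ j ∈ Finset.Icc 1 (min (t + 1) k),
      (Nat.choose t (j - 1) : ℝ≥0∞) * (fallingSum k j : ℝ≥0∞) * A k lam (t + 1 - j) := by
  have step1 : A k lam (t + 1)
      = ∑ s : Fin k, ((s.1 + 1 : ℕ) : ℝ≥0∞) *
          ∑' f : Fin k → ℕ, (f s : ℝ≥0∞) *
            (Nat.descFactorial (S k f - 1) t : ℝ≥0∞) * w k lam f := by
    unfold A
    have h1 : ∀ f : Fin k → ℕ, (Nat.descFactorial (S k f) (t + 1) : ℝ≥0∞) * w k lam f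
        = ∑ s : Fin k, ((s.1 + 1 : ℕ) : ℝ≥0∞) *
            ((f s : ℝ≥0∞) * (Nat.descFactorial (S k f - 1) t : ℝ≥0∞) * w k lam f) := by
      intro f
      rw [descFactorial_succ']
      have h2 : ((S k f : ℕ) : ℝ≥0∞) = ∑ s : Fin k, ((s.1 + 1 : ℕ) : ℝ≥0∞) * (f s : ℝ≥0∞) := by
        unfold S
        push_cast
        rfl
      push_cast
      rw [h2, Finset.sum_mul, Finset.sum_mul]
      refine Finset.sum_congr rfl fun s _ => ?_
      push_cast
      ring
    simp_rw [h1]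
    rw [Summable.tsum_finsetSum fun s _ => ENNReal.summable]
    exact Finset.sum_congr rfl fun s _ => ENNReal.tsum_mul_left
  have step2 : ∀ s : Fin k,
      ∑' f : Fin k → ℕ, (f s : ℝ≥0∞) *
          (Nat.descFactorial (S k f - 1) t : ℝ≥0∞) * w k lam f
        = ENNReal.ofReal lam * ∑ i ∈ Finset.range (t + 1),
            ((t.choose i * Nat.descFactorial s.1 i : ℕ) : ℝ≥0∞) * A k lam (t - i) := by
    intro s
    rw [shift k hlam s (fun m => (Nat.descFactorial (m - 1) t : ℝ≥0∞))]
    congr 1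
    have h3 : ∀ g : Fin k → ℕ,
        (Nat.descFactorial (S k g + (s.1 + 1) - 1) t : ℝ≥0∞) * w k lam g
          = ∑ i ∈ Finset.range (t + 1),
              ((t.choose i * Nat.descFactorial s.1 i : ℕ) : ℝ≥0∞) *
                ((Nat.descFactorial (S k g) (t - i) : ℝ≥0∞) * w k lam g) := by
      intro g
      have h4 : S k g + (s.1 + 1) - 1 = s.1 + S k g := by omega
      rw [h4, descFactorial_add_eq, Nat.cast_sum, Finset.sum_mul]
      refine Finset.sum_congr rfl fun i _ => ?_
      push_cast
      ring
    simp_rw [h3]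
    rw [Summable.tsum_finsetSum fun i _ => ENNReal.summable]
    exact Finset.sum_congr rfl fun i _ => ENNReal.tsum_mul_left
  rw [step1]
  simp_rw [step2]
  have step3 : ∑ s : Fin k, ((s.1 + 1 : ℕ) : ℝ≥0∞) *
      (ENNReal.ofReal lam * ∑ i ∈ Finset.range (t + 1),
        ((t.choose i * Nat.descFactorial s.1 i : ℕ) : ℝ≥0∞) * A k lam (t - i))
      = ENNReal.ofReal lam * ∑ i ∈ Finset.range (t + 1),
          (Nat.choose t i : ℝ≥0∞) * ((fallingSum k (i + 1) : ℕ) : ℝ≥0∞) * A k lam (t - i) := by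
    have hs : ∀ s : Fin k, ((s.1 + 1 : ℕ) : ℝ≥0∞) *
        (ENNReal.ofReal lam * ∑ i ∈ Finset.range (t + 1),
          ((t.choose i * Nat.descFactorial s.1 i : ℕ) : ℝ≥0∞) * A k lam (t - i))
        = ∑ i ∈ Finset.range (t + 1), ENNReal.ofReal lam *
            ((Nat.choose t i : ℝ≥0∞) * (((s.1 + 1) * Nat.descFactorial s.1 i : ℕ) : ℝ≥0∞)
              * A k lam (t - i)) := by
      intro s
      rw [Finset.mul_sum, Finset.mul_sum]
      refine Finset.sum_congr rfl fun i _ => ?_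
      push_cast
      ring
    simp_rw [hs]
    rw [Finset.sum_comm, Finset.mul_sum]
    refine Finset.sum_congr rfl fun i _ => ?_
    rw [← Finset.mul_sum]
    congr 1
    have h5 : ∑ s : Fin k, (Nat.choose t i : ℝ≥0∞) *
          ((((s.1 + 1) * Nat.descFactorial s.1 i : ℕ) : ℝ≥0∞)) * A k lam (t - i)
        = (Nat.choose t i : ℝ≥0∞) *
            ((((∑ s : Fin k, (s.1 + 1) * Nat.descFactorial s.1 i : ℕ)) : ℝ≥0∞)) * A k lam (t - i) := by
      rw [Nat.cast_sum, Finset.mul_sum, Finset.sum_mul]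
    calc ∑ s : Fin k, (Nat.choose t i : ℝ≥0∞) *
          ((((s.1 + 1) * Nat.descFactorial s.1 i : ℕ) : ℝ≥0∞)) * A k lam (t - i)
        = (Nat.choose t i : ℝ≥0∞) *
            ((((∑ s : Fin k, (s.1 + 1) * Nat.descFactorial s.1 i : ℕ)) : ℝ≥0∞)) * A k lam (t - i) := h5
      _ = (Nat.choose t i : ℝ≥0∞) * ((fallingSum k (i + 1) : ℕ) : ℝ≥0∞) * A k lam (t - i) := by
          rw [sum_descFactorial_fin]
  rw [step3]
  congr 1
  have step4 : ∑ i ∈ Finset.range (t + 1),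
      (Nat.choose t i : ℝ≥0∞) * ((fallingSum k (i + 1) : ℕ) : ℝ≥0∞) * A k lam (t - i)
      = ∑ j ∈ Finset.Icc 1 (t + 1),
          (Nat.choose t (j - 1) : ℝ≥0∞) * ((fallingSum k j : ℕ) : ℝ≥0∞) * A k lam (t + 1 - j) := by
    rw [← sum_range_eq_Icc (t + 1) (fun j =>
      (Nat.choose t (j - 1) : ℝ≥0∞) * ((fallingSum k j : ℕ) : ℝ≥0∞) * A k lam (t + 1 - j))]
    refine Finset.sum_congr rfl fun i _ => ?_
    have h6 : i + 1 - 1 = i := rfl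
    have h7 : t + 1 - (i + 1) = t - i := by omega
    rw [h6, h7]
  rw [step4]
  refine (Finset.sum_subset (fun x hx => ?_) (fun x hx hnx => ?_)).symm
  · simp only [Finset.mem_Icc] at hx ⊢
    omega
  · simp only [Finset.mem_Icc] at hx hnx
    have : k < x := by omega
    rw [fallingSum_eq_zero this, Nat.cast_zero, mul_zero, zero_mul]

lemma A_ne_top (k : ℕ) {lam : ℝ} (hlam : 0 ≤ lam) : ∀ n, A k lam n ≠ ∞ := by
  intro n
  induction n using Nat.strong_induction_on with
  | _ n ih =>
    match n with
    | 0 => rw [A_zero k hlam]; exact ENNReal.ofReal_ne_top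
    | t + 1 =>
      rw [A_rec k hlam t]
      refine ENNReal.mul_ne_top ENNReal.ofReal_ne_top ?_
      refine (ENNReal.sum_lt_top.mpr fun j hj => ?_).ne
      simp only [Finset.mem_Icc] at hj
      have hA : A k lam (t + 1 - j) ≠ ∞ := ih _ (by omega)
      exact ENNReal.mul_lt_top
        (ENNReal.mul_lt_top (ENNReal.natCast_lt_top _) (ENNReal.natCast_lt_top _)) hA.lt_top

lemma facM_eq (k : ℕ) {lam : ℝ} (hlam : 0 ≤ lam) (m : ℕ) :
    facMoment k lam m = Real.exp (-(k * lam)) * (A k lam m).toReal := by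
  match m with
  | 0 =>
    rw [show facMoment k lam 0 = 1 from if_pos rfl, A_zero k hlam,
      ENNReal.toReal_ofReal (Real.exp_nonneg _), ← Real.exp_add]
    simp
  | n + 1 =>
    rw [show facMoment k lam (n+1) = ∑' m : ℕ, (Nat.descFactorial m (n+1) : ℝ) * poissonK k lam m
      from if_neg (by omega)]
    set N := n + 1
    set EN : ℕ → ℝ≥0∞ := fun m' => (Nat.descFactorial m' N : ℝ≥0∞) *
      (ENNReal.ofReal (Real.exp (-(k * lam))) *
        ∑ f ∈ Finset.filter (fun f : Fin k → ℕ => ∑ j : Fin k, (j.1 + 1) * f j = m')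
            (Fintype.piFinset fun _ : Fin k => Finset.range (m' + 1)), w k lam f) with hEN
    have hterm : ∀ m', (Nat.descFactorial m' N : ℝ) * poissonK k lam m' = (EN m').toReal := by
      intro m'
      have hQ : ENNReal.ofReal (∑ f ∈ Finset.filter
            (fun f : Fin k → ℕ => ∑ j : Fin k, (j.1 + 1) * f j = m')
            (Fintype.piFinset fun _ : Fin k => Finset.range (m' + 1)),
          ∏ j : Fin k, lam ^ f j / (Nat.factorial (f j) : ℝ))
          = ∑ f ∈ Finset.filter (fun f : Fin k → ℕ => ∑ j : Fin k, (j.1 + 1) * f j = m')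
            (Fintype.piFinset fun _ : Fin k => Finset.range (m' + 1)), w k lam f := by
        rw [ENNReal.ofReal_sum_of_nonneg (fun f _ =>
          Finset.prod_nonneg fun j _ => by positivity)]
        rfl
      rw [hEN]
      simp only []
      rw [← hQ, ENNReal.toReal_mul, ENNReal.toReal_mul, ENNReal.toReal_natCast,
        ENNReal.toReal_ofReal (Real.exp_nonneg _),
        ENNReal.toReal_ofReal (Finset.sum_nonneg fun f _ =>
          Finset.prod_nonneg fun j _ => by positivity)]
      unfold poissonK
      ring
    have hfin : ∀ m', EN m' ≠ ∞ := by
      intro m'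
      refine ENNReal.mul_ne_top (ENNReal.natCast_ne_top _)
        (ENNReal.mul_ne_top ENNReal.ofReal_ne_top ?_)
      refine (ENNReal.sum_lt_top.mpr fun f _ => ?_).ne
      exact ENNReal.ofReal_lt_top
    have hsum : ∑' m', EN m' = ENNReal.ofReal (Real.exp (-(k * lam))) * A k lam N := by
      have : ∀ m', EN m' = ENNReal.ofReal (Real.exp (-(k * lam))) *
          ((Nat.descFactorial m' N : ℝ≥0∞) *
            ∑ f ∈ Finset.filter (fun f : Fin k → ℕ => ∑ j : Fin k, (j.1 + 1) * f j = m')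
              (Fintype.piFinset fun _ : Fin k => Finset.range (m' + 1)), w k lam f) := by
        intro m'; rw [hEN]; ring
      simp_rw [this]
      rw [ENNReal.tsum_mul_left]
      congr 1
      rw [← tsum_fiber k lam (fun m'' => (Nat.descFactorial m'' N : ℝ≥0∞))]
      rfl
    calc ∑' m', (Nat.descFactorial m' N : ℝ) * poissonK k lam m'
        = ∑' m', (EN m').toReal := by exact tsum_congr hterm
      _ = (∑' m', EN m').toReal := (ENNReal.tsum_toReal_eq hfin).symm
      _ = Real.exp (-(k * lam)) * (A k lam N).toReal := by
          rw [hsum, ENNReal.toReal_mul, ENNReal.toReal_ofReal (Real.exp_nonneg _)]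

end PK

/-- Recurrence for the factorial moments of the Poisson distribution of order `k`:
`M_(n) = λ · Σ_{j=1}^{min(n,k)} C(n−1, j−1) · 𝓕_j(k) · M_(n−j)` for `n ≥ 1`. -/
theorem poissonK_facMoment_recurrence (k : ℕ) (hk : 1 ≤ k) (lam : ℝ) (hlam : 0 < lam)
    (n : ℕ) (hn : 1 ≤ n) :
    facMoment k lam n =
      lam * ∑ j ∈ Finset.Icc 1 (min n k),
        (Nat.choose (n - 1) (j - 1) : ℝ) * (fallingSum k j : ℝ) * facMoment k lam (n - j) := by
  obtain ⟨t, rfl⟩ : ∃ t, n = t + 1 := ⟨n - 1, by omega⟩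
  have hl : (0 : ℝ) ≤ lam := hlam.le
  have hexp : Real.exp (-(k * lam)) * Real.exp (k * lam) = 1 := by
    rw [← Real.exp_add]; simp
  have hAval : ∀ m, (PK.A k lam m).toReal = Real.exp (k * lam) * facMoment k lam m := by
    intro m
    rw [PK.facM_eq k hl m, ← mul_assoc, mul_comm (Real.exp (k * lam)) (Real.exp (-(k * lam))),
      hexp, one_mul]
  rw [PK.facM_eq k hl (t + 1), PK.A_rec k hl t, ENNReal.toReal_mul,
    ENNReal.toReal_ofReal hl,
    ENNReal.toReal_sum (fun j hj => by
      refine ENNReal.mul_ne_top (ENNReal.mul_ne_top (ENNReal.natCast_ne_top _)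
        (ENNReal.natCast_ne_top _)) (PK.A_ne_top k hl _))]
  have hterm : ∀ j ∈ Finset.Icc 1 (min (t + 1) k),
      ((Nat.choose t (j - 1) : ℝ≥0∞) * (fallingSum k j : ℝ≥0∞) * PK.A k lam (t + 1 - j)).toReal
        = (Nat.choose t (j - 1) : ℝ) * (fallingSum k j : ℝ) *
            (Real.exp (k * lam) * facMoment k lam (t + 1 - j)) := by
    intro j hj
    rw [ENNReal.toReal_mul, ENNReal.toReal_mul, ENNReal.toReal_natCast, ENNReal.toReal_natCast, hAval]
  rw [Finset.sum_congr rfl hterm]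
  have hn1 : t + 1 - 1 = t := rfl
  rw [hn1, Finset.mul_sum, Finset.mul_sum, Finset.mul_sum]
  refine Finset.sum_congr rfl fun j hj => ?_
  calc Real.exp (-(k * lam)) * (lam * ((Nat.choose t (j - 1) : ℝ) * (fallingSum k j : ℝ) *
          (Real.exp (k * lam) * facMoment k lam (t + 1 - j))))
      = (Real.exp (-(k * lam)) * Real.exp (k * lam)) * (lam * ((Nat.choose t (j - 1) : ℝ) *
          (fallingSum k j : ℝ) * facMoment k lam (t + 1 - j))) := by ring
    _ = lam * ((Nat.choose t (j - 1) : ℝ) * (fallingSum k j : ℝ) *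
          facMoment k lam (t + 1 - j)) := by rw [hexp, one_mul]
end

section
/- For every integer k ≥ 1, every real λ > 0, and every integer n ≥ 1, the n-th raw moment of the Poisson distribution of order k satisfies the recurrence M_n(k,λ) = λ · Σ_{j=1}^{n} C(n−1, j−1) · 𝓢_j(k) · M_{n−j}(k,λ), where M_0(k,λ) = 1. -/
open scoped BigOperators

/-- The `n`-th raw moment `M_n(k,λ) = Σ_{m=0}^∞ m^n·P_m(k,λ)`,
with the convention `M_0(k,λ) = 1`. -/
noncomputable def rawMoment (k : ℕ) (lam : ℝ) (n : ℕ) : ℝ :=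
  if n = 0 then 1 else ∑' m : ℕ, (m : ℝ) ^ n * poissonK k lam m

/-- The power sum `𝓢_j(k) = Σ_{s=1}^k s^j`. -/
def powerSum (k j : ℕ) : ℕ := ∑ s ∈ Finset.Icc 1 k, s ^ j

noncomputable def pterm (lam : ℝ) (m : ℕ) : ℝ := lam ^ m / (Nat.factorial m : ℝ)

def wt (k : ℕ) (f : Fin k → ℕ) : ℕ := ∑ j : Fin k, (j.1 + 1) * f j

noncomputable def FF (k : ℕ) (lam : ℝ) (f : Fin k → ℕ) : ℝ :=
  ∏ j : Fin k, pterm lam (f j)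

lemma pterm_nonneg {lam : ℝ} (h : 0 ≤ lam) (m : ℕ) : 0 ≤ pterm lam m :=
  div_nonneg (pow_nonneg h m) (by positivity)

lemma FF_nonneg {k : ℕ} {lam : ℝ} (h : 0 ≤ lam) (f : Fin k → ℕ) : 0 ≤ FF k lam f :=
  Finset.prod_nonneg fun j _ => pterm_nonneg h _

lemma tsum_pterm {lam : ℝ} : ∑' m : ℕ, pterm lam m = Real.exp lam := by
  rw [Real.exp_eq_exp_ℝ, NormedSpace.exp_eq_tsum_div]
  rfl

lemma pow_le_exp_fact (n m : ℕ) : ((m : ℝ)) ^ n ≤ (Nat.factorial n : ℝ) * Real.exp m := by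
  have h1 : (m : ℝ) ^ n / (Nat.factorial n : ℝ) ≤ Real.exp m := by
    refine le_trans ?_ (Real.sum_le_exp_of_nonneg (by positivity) (n + 1))
    exact Finset.single_le_sum (f := fun i => (m : ℝ) ^ i / (Nat.factorial i : ℝ))
      (fun i _ => by positivity) (Finset.self_mem_range_succ n)
  have hfac : (0 : ℝ) < (Nat.factorial n : ℝ) := by positivity
  calc ((m : ℝ)) ^ n = ((m : ℝ) ^ n / (Nat.factorial n : ℝ)) * (Nat.factorial n : ℝ) := by
        field_simp
    _ ≤ Real.exp m * (Nat.factorial n : ℝ) := by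
        exact mul_le_mul_of_nonneg_right h1 hfac.le
    _ = (Nat.factorial n : ℝ) * Real.exp m := by ring

lemma summable_pow_pterm {lam : ℝ} (h : 0 ≤ lam) (n : ℕ) :
    Summable (fun m : ℕ => (m : ℝ) ^ n * pterm lam m) := by
  refine Summable.of_nonneg_of_le (fun m => by
      have := pterm_nonneg h m; positivity)
    (fun m => ?_)
    ((Real.summable_pow_div_factorial (Real.exp 1 * lam)).mul_left (Nat.factorial n : ℝ))
  have hexp : (Real.exp 1 * lam) ^ m = Real.exp m * lam ^ m := by
    rw [mul_pow, ← Real.exp_one_pow]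
  rw [pterm, hexp]
  have := pow_le_exp_fact n m
  have hl : (0:ℝ) ≤ lam ^ m / (Nat.factorial m : ℝ) := by positivity
  calc (m:ℝ)^n * (lam ^ m / (Nat.factorial m : ℝ))
      ≤ ((Nat.factorial n : ℝ) * Real.exp m) * (lam ^ m / (Nat.factorial m : ℝ)) :=
        mul_le_mul_of_nonneg_right this hl
    _ = (Nat.factorial n : ℝ) * (Real.exp m * lam ^ m / (Nat.factorial m : ℝ)) := by ring
lemma pi_hasSum : ∀ {K : ℕ} (h : Fin K → ℕ → ℝ), (∀ j m, 0 ≤ h j m) → (∀ j, Summable (h j)) →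
    HasSum (fun f : Fin K → ℕ => ∏ j, h j (f j)) (∏ j, ∑' m, h j m) := by
  intro K
  induction K with
  | zero =>
    intro h _ _
    have h1 : (fun f : Fin 0 → ℕ => ∏ j, h j (f j)) = fun _ => (1 : ℝ) := by
      funext f; simp
    have h2 : (∏ j : Fin 0, ∑' m, h j m) = 1 := by simp
    rw [h1, h2]
    have := hasSum_single (f := fun _ : Fin 0 → ℕ => (1:ℝ)) default
      (fun b hb => absurd (Subsingleton.elim b default) hb)
    simpa using this
  | succ K ih =>
    intro h h0 hs
    have hv : HasSum (fun b : Fin K → ℕ => ∏ j, h j.succ (b j)) (∏ j : Fin K, ∑' m, h j.succ m) :=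
      ih _ (fun j m => h0 _ _) (fun j => hs _)
    set e := Fin.consEquiv (fun _ : Fin (K + 1) => ℕ) with he
    rw [← Equiv.hasSum_iff e]
    have hcomp : ((fun f : Fin (K + 1) → ℕ => ∏ j, h j (f j)) ∘ e) =
        fun p : ℕ × (Fin K → ℕ) => h 0 p.1 * ∏ j : Fin K, h j.succ (p.2 j) := by
      funext p
      simp [he, Fin.consEquiv, Fin.prod_univ_succ]
    rw [hcomp]
    have hsum := Summable.mul_of_nonneg (hs 0) hv.summable (fun m => h0 0 m)
      (fun b => Finset.prod_nonneg fun j _ => h0 _ _)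
    rw [Fin.prod_univ_succ]
    have H := (hs 0).hasSum.mul hv hsum
    exact H
lemma summable_pow_s (k : ℕ) {lam : ℝ} (h : 0 ≤ lam) (n : ℕ) (s : Fin k) :
    Summable (fun f : Fin k → ℕ => ((f s : ℝ)) ^ n * FF k lam f) := by
  classical
  have key := pi_hasSum (fun j m => (if j = s then ((m : ℝ)) ^ n else 1) * pterm lam m)
    (fun j m => by have := pterm_nonneg h m; split <;> positivity)
    (fun j => by
      by_cases hj : j = s
      · subst hj; simpa using summable_pow_pterm h n
      · simp only [if_neg hj, one_mul]
        simpa using summable_pow_pterm h 0)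
  refine key.summable.congr fun f => ?_
  rw [Finset.prod_mul_distrib]
  congr 1
  simp [Finset.prod_ite_eq']

lemma wt_pow_le (k : ℕ) (hk : 0 < k) (n : ℕ) (f : Fin k → ℕ) :
    (wt k f) ^ n ≤ k ^ (2 * n) * ∑ s : Fin k, (f s) ^ n := by
  have hne : Nonempty (Fin k) := ⟨⟨0, hk⟩⟩
  obtain ⟨j0, -, hj0⟩ := Finset.exists_mem_eq_sup (Finset.univ : Finset (Fin k))
    Finset.univ_nonempty f
  have h1 : wt k f ≤ k * (k * Finset.univ.sup f) := by
    have := Finset.sum_le_card_nsmul (Finset.univ : Finset (Fin k))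
      (fun j : Fin k => (j.1 + 1) * f j) (k * Finset.univ.sup f)
      (fun j _ => Nat.mul_le_mul j.2 (Finset.le_sup (Finset.mem_univ j)))
    simpa [wt, Finset.card_univ, smul_eq_mul] using this
  have h2 : (Finset.univ.sup f) ^ n ≤ ∑ s : Fin k, (f s) ^ n := by
    rw [hj0]
    exact Finset.single_le_sum (f := fun s => (f s) ^ n) (fun s _ => Nat.zero_le _)
      (Finset.mem_univ j0)
  calc (wt k f) ^ n ≤ (k * (k * Finset.univ.sup f)) ^ n := Nat.pow_le_pow_left h1 n
    _ = k ^ (2 * n) * (Finset.univ.sup f) ^ n := by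
        rw [two_mul, pow_add, mul_pow, mul_pow]; ring
    _ ≤ k ^ (2 * n) * ∑ s : Fin k, (f s) ^ n := Nat.mul_le_mul_left _ h2

lemma summable_wt (k : ℕ) (hk : 0 < k) {lam : ℝ} (h : 0 ≤ lam) (n : ℕ) :
    Summable (fun f : Fin k → ℕ => ((wt k f : ℝ)) ^ n * FF k lam f) := by
  have hb := (summable_sum (fun (s : Fin k) (_ : s ∈ Finset.univ) =>
    summable_pow_s k h n s)).mul_left ((k : ℝ) ^ (2 * n))
  refine Summable.of_nonneg_of_le (fun f => by have := FF_nonneg h f; positivity)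
    (fun f => ?_) hb
  have hcast : ((wt k f : ℝ)) ^ n ≤ (k : ℝ) ^ (2 * n) * ∑ s : Fin k, ((f s : ℝ)) ^ n := by
    exact_mod_cast wt_pow_le k hk n f
  have hFF := FF_nonneg h f
  calc ((wt k f : ℝ)) ^ n * FF k lam f
      ≤ ((k : ℝ) ^ (2 * n) * ∑ s : Fin k, ((f s : ℝ)) ^ n) * FF k lam f :=
        mul_le_mul_of_nonneg_right hcast hFF
    _ = (k : ℝ) ^ (2 * n) * ∑ s : Fin k, ((f s : ℝ)) ^ n * FF k lam f := by
        rw [mul_assoc, Finset.sum_mul]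
noncomputable def UU (k : ℕ) (lam : ℝ) (n : ℕ) : ℝ :=
  ∑' f : Fin k → ℕ, ((wt k f : ℝ)) ^ n * FF k lam f

lemma UU_zero (k : ℕ) {lam : ℝ} (hlam : 0 ≤ lam) : UU k lam 0 = Real.exp (k * lam) := by
  have key := pi_hasSum (fun _ : Fin k => pterm lam) (fun _ m => pterm_nonneg hlam m)
    (fun _ => by simpa using summable_pow_pterm hlam 0)
  have h1 : UU k lam 0 = ∑' f : Fin k → ℕ, FF k lam f := by
    refine tsum_congr fun f => ?_
    rw [pow_zero, one_mul]
  have h2 : (∑' f : Fin k → ℕ, FF k lam f) = ∏ _j : Fin k, ∑' m : ℕ, pterm lam m := key.tsum_eq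
  rw [h1, h2, tsum_pterm, Finset.prod_const, Finset.card_univ, Fintype.card_fin,
    ← Real.exp_nat_mul]

lemma tsum_moment_eq (k : ℕ) (hk : 0 < k) {lam : ℝ} (hlam : 0 < lam) (n : ℕ) :
    ∑' m : ℕ, (m : ℝ) ^ n * poissonK k lam m = Real.exp (-(k * lam)) * UU k lam n := by
  classical
  have hG := summable_wt k hk hlam.le n
  have key : ∀ m : ℕ, (m : ℝ) ^ n * poissonK k lam m
      = Real.exp (-(k * lam)) *
          ∑' f : (wt k ⁻¹' {m} : Set (Fin k → ℕ)), ((wt k f : ℝ)) ^ n * FF k lam f := by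
    intro m
    set B : Finset (Fin k → ℕ) :=
      Finset.filter (fun f : Fin k → ℕ => ∑ j : Fin k, (j.1 + 1) * f j = m)
        (Fintype.piFinset fun _ : Fin k => Finset.range (m + 1)) with hB
    have hset : wt k ⁻¹' {m} = ↑B := by
      ext f
      simp only [Set.mem_preimage, Set.mem_singleton_iff, Finset.coe_filter, Set.mem_setOf_eq,
        Fintype.mem_piFinset, Finset.mem_range, Nat.lt_succ_iff, hB]
      constructor
      · intro hf
        refine ⟨fun j => ?_, hf⟩
        calc f j ≤ (j.1 + 1) * f j := Nat.le_mul_of_pos_left _ (Nat.succ_pos _)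
          _ ≤ ∑ i : Fin k, (i.1 + 1) * f i :=
            Finset.single_le_sum (f := fun i : Fin k => (i.1 + 1) * f i)
              (fun i _ => Nat.zero_le _) (Finset.mem_univ j)
          _ = m := hf
      · exact fun hf => hf.2
    have hfib : ∑' f : (wt k ⁻¹' {m} : Set (Fin k → ℕ)), ((wt k f : ℝ)) ^ n * FF k lam f
        = ∑ f ∈ B, ((wt k f : ℝ)) ^ n * FF k lam f := by
      rw [tsum_congr_set_coe (fun f => ((wt k f : ℝ)) ^ n * FF k lam f) hset]
      exact Finset.tsum_subtype' B (fun f => ((wt k f : ℝ)) ^ n * FF k lam f)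
    have hBsum : ∑ f ∈ B, ((wt k f : ℝ)) ^ n * FF k lam f
        = (m : ℝ) ^ n * ∑ f ∈ B, FF k lam f := by
      rw [Finset.mul_sum]
      refine Finset.sum_congr rfl fun f hf => ?_
      have : wt k f = m := (Finset.mem_filter.mp hf).2
      rw [this]
    have hP : poissonK k lam m = Real.exp (-(k * lam)) * ∑ f ∈ B, FF k lam f := rfl
    rw [hP, hfib, hBsum]; ring
  rw [tsum_congr key, tsum_mul_left]
  congr 1
  exact (hG.hasSum.tsum_fiberwise (wt k)).tsum_eq

lemma rawMoment_eq (k : ℕ) (hk : 0 < k) {lam : ℝ} (hlam : 0 < lam) (n : ℕ) :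
    rawMoment k lam n = Real.exp (-(k * lam)) * UU k lam n := by
  by_cases hn : n = 0
  · subst hn
    rw [rawMoment, if_pos rfl, UU_zero k hlam.le, ← Real.exp_add]
    simp
  · rw [rawMoment, if_neg hn]
    exact tsum_moment_eq k hk hlam n
lemma wt_update (k : ℕ) (s : Fin k) (g : Fin k → ℕ) :
    wt k (Function.update g s (g s + 1)) = wt k g + (s.1 + 1) := by
  classical
  unfold wt
  have : ∀ j : Fin k, (j.1 + 1) * (Function.update g s (g s + 1) j)
      = (j.1 + 1) * g j + (if j = s then s.1 + 1 else 0) := by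
    intro j
    by_cases hj : j = s
    · subst hj; rw [Function.update_self, if_pos rfl]; ring
    · rw [Function.update_of_ne hj, if_neg hj, add_zero]
  rw [Finset.sum_congr rfl fun j _ => this j, Finset.sum_add_distrib,
    Finset.sum_ite_eq' Finset.univ s (fun _ => s.1 + 1), if_pos (Finset.mem_univ s)]

lemma FF_update (k : ℕ) {lam : ℝ} (hlam : 0 < lam) (s : Fin k) (g : Fin k → ℕ) :
    ((g s : ℝ) + 1) * FF k lam (Function.update g s (g s + 1)) = lam * FF k lam g := by
  classical
  unfold FF
  rw [← Finset.mul_prod_erase Finset.univ _ (Finset.mem_univ s),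
    ← Finset.mul_prod_erase Finset.univ (fun j => pterm lam (g j)) (Finset.mem_univ s)]
  have herase : ∀ j ∈ Finset.univ.erase s,
      pterm lam (Function.update g s (g s + 1) j) = pterm lam (g j) := by
    intro j hj
    rw [Function.update_of_ne (Finset.mem_erase.mp hj).1]
  rw [Finset.prod_congr rfl herase, Function.update_self]
  have hkey : ((g s : ℝ) + 1) * pterm lam (g s + 1) = lam * pterm lam (g s) := by
    unfold pterm
    rw [pow_succ, Nat.factorial_succ]
    push_cast
    have h1 : ((g s : ℝ) + 1) ≠ 0 := by positivity
    have h2 : ((Nat.factorial (g s) : ℝ)) ≠ 0 := by positivity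
    field_simp
  calc ((g s : ℝ) + 1) * (pterm lam (g s + 1) * ∏ j ∈ Finset.univ.erase s, pterm lam (g j))
      = (((g s : ℝ) + 1) * pterm lam (g s + 1)) * ∏ j ∈ Finset.univ.erase s, pterm lam (g j) := by
        ring
    _ = lam * (pterm lam (g s) * ∏ j ∈ Finset.univ.erase s, pterm lam (g j)) := by
        rw [hkey]; ring

lemma shift_lemma (k : ℕ) (hk : 0 < k) {lam : ℝ} (hlam : 0 < lam) (s : Fin k) (m : ℕ) :
    ∑' f : Fin k → ℕ, ((wt k f : ℝ)) ^ m * (f s : ℝ) * FF k lam f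
      = lam * ∑ i ∈ Finset.range (m + 1),
          (Nat.choose m i : ℝ) * ((s.1 + 1 : ℕ) : ℝ) ^ i * UU k lam (m - i) := by
  classical
  set H : (Fin k → ℕ) → ℝ := fun f => ((wt k f : ℝ)) ^ m * (f s : ℝ) * FF k lam f with hH
  set ι : (Fin k → ℕ) → (Fin k → ℕ) := fun g => Function.update g s (g s + 1) with hι
  have hinj : Function.Injective ι := by
    intro a b hab
    have h1 : ∀ j, Function.update a s (a s + 1) j = Function.update b s (b s + 1) j :=
      fun j => congrFun hab j
    funext j
    by_cases hj : j = s
    · subst hj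
      have := h1 j
      rw [Function.update_self, Function.update_self] at this
      omega
    · have := h1 j
      rwa [Function.update_of_ne hj, Function.update_of_ne hj] at this
  have hsupp : Function.support H ⊆ Set.range ι := by
    intro f hf
    have hfs : f s ≠ 0 := by
      intro h0
      apply hf
      rw [hH]
      simp [h0]
    refine ⟨Function.update f s (f s - 1), ?_⟩
    funext j
    by_cases hj : j = s
    · subst hj
      rw [hι]
      simp only [Function.update_self]
      omega
    · rw [hι]
      simp only
      rw [Function.update_of_ne hj, Function.update_of_ne hj]
  have hkey := hinj.tsum_eq (f := H) hsupp
  have hHι : ∀ g : Fin k → ℕ, H (ι g)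
      = lam * (((wt k g : ℝ) + ((s.1 + 1 : ℕ) : ℝ)) ^ m * FF k lam g) := by
    intro g
    rw [hH, hι]
    simp only
    rw [wt_update k s g, Function.update_self]
    push_cast
    calc ((wt k g : ℝ) + (s.1 + 1 : ℝ)) ^ m * ((g s : ℝ) + 1)
          * FF k lam (Function.update g s (g s + 1))
        = ((wt k g : ℝ) + (s.1 + 1 : ℝ)) ^ m
          * (((g s : ℝ) + 1) * FF k lam (Function.update g s (g s + 1))) := by ring
      _ = ((wt k g : ℝ) + (s.1 + 1 : ℝ)) ^ m * (lam * FF k lam g) := by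
          rw [FF_update k hlam s g]
      _ = lam * (((wt k g : ℝ) + (s.1 + 1 : ℝ)) ^ m * FF k lam g) := by ring
  have hexp : ∀ g : Fin k → ℕ, H (ι g)
      = ∑ i ∈ Finset.range (m + 1), lam * ((Nat.choose m i : ℝ) * ((s.1 + 1 : ℕ) : ℝ) ^ i
          * (((wt k g : ℝ)) ^ (m - i) * FF k lam g)) := by
    intro g
    rw [hHι g, add_comm ((wt k g : ℝ)) _, add_pow]
    rw [Finset.sum_mul, Finset.mul_sum]
    refine Finset.sum_congr rfl fun i hi => ?_
    ring
  have hsummands : ∀ i ∈ Finset.range (m + 1),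
      Summable (fun g : Fin k → ℕ => lam * ((Nat.choose m i : ℝ) * ((s.1 + 1 : ℕ) : ℝ) ^ i
        * (((wt k g : ℝ)) ^ (m - i) * FF k lam g))) := by
    intro i _
    exact ((summable_wt k hk hlam.le (m - i)).mul_left _).mul_left _
  calc ∑' f, H f = ∑' g, H (ι g) := hkey.symm
    _ = ∑' g, ∑ i ∈ Finset.range (m + 1), lam * ((Nat.choose m i : ℝ) * ((s.1 + 1 : ℕ) : ℝ) ^ i
          * (((wt k g : ℝ)) ^ (m - i) * FF k lam g)) := tsum_congr hexp
    _ = ∑ i ∈ Finset.range (m + 1), ∑' g : Fin k → ℕ,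
          lam * ((Nat.choose m i : ℝ) * ((s.1 + 1 : ℕ) : ℝ) ^ i
          * (((wt k g : ℝ)) ^ (m - i) * FF k lam g)) := Summable.tsum_finsetSum hsummands
    _ = lam * ∑ i ∈ Finset.range (m + 1),
          (Nat.choose m i : ℝ) * ((s.1 + 1 : ℕ) : ℝ) ^ i * UU k lam (m - i) := by
        rw [Finset.mul_sum]
        refine Finset.sum_congr rfl fun i _ => ?_
        rw [tsum_mul_left, tsum_mul_left, UU]
lemma fin_powerSum (k j : ℕ) : ∑ s : Fin k, ((s.1 + 1 : ℕ) : ℝ) ^ j = (powerSum k j : ℝ) := by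
  rw [powerSum]
  push_cast
  rw [Fin.sum_univ_eq_sum_range (fun i => ((i : ℝ) + 1) ^ j) k]
  refine Finset.sum_bij' (fun i _ => i + 1) (fun t _ => t - 1) ?_ ?_ ?_ ?_ ?_
  · intro a ha; simp only [Finset.mem_range] at ha; simp only [Finset.mem_Icc]; omega
  · intro a ha; simp only [Finset.mem_Icc] at ha; simp only [Finset.mem_range]; omega
  · intro a ha; omega
  · intro a ha; simp only [Finset.mem_Icc] at ha; omega
  · intro a ha; push_cast; ring

/-- Recurrence for the raw moments of the Poisson distribution of order `k`:
`M_n = λ · Σ_{j=1}^{n} C(n−1, j−1) · 𝓢_j(k) · M_{n−j}` for `n ≥ 1`. -/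
theorem poissonK_rawMoment_recurrence (k : ℕ) (hk : 1 ≤ k) (lam : ℝ) (hlam : 0 < lam)
    (n : ℕ) (hn : 1 ≤ n) :
    rawMoment k lam n =
      lam * ∑ j ∈ Finset.Icc 1 n,
        (Nat.choose (n - 1) (j - 1) : ℝ) * (powerSum k j : ℝ) * rawMoment k lam (n - j) := by
  have hk0 : 0 < k := hk
  -- Step 1: split U n over coordinates
  have hsum_H : ∀ s : Fin k, Summable
      (fun f : Fin k → ℕ => ((wt k f : ℝ)) ^ (n - 1) * (f s : ℝ) * FF k lam f) := by
    intro s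
    refine Summable.of_nonneg_of_le (fun f => by have := FF_nonneg hlam.le f; positivity)
      (fun f => ?_) (summable_wt k hk0 hlam.le n)
    have hfs : (f s : ℝ) ≤ (wt k f : ℝ) := by
      have : f s ≤ wt k f := by
        refine le_trans (Nat.le_mul_of_pos_left _ (Nat.succ_pos s.1)) ?_
        exact Finset.single_le_sum (f := fun i : Fin k => (i.1 + 1) * f i)
          (fun i _ => Nat.zero_le _) (Finset.mem_univ s)
      exact_mod_cast this
    have hFF := FF_nonneg hlam.le f
    calc ((wt k f : ℝ)) ^ (n - 1) * (f s : ℝ) * FF k lam f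
        ≤ ((wt k f : ℝ)) ^ (n - 1) * (wt k f : ℝ) * FF k lam f := by
          refine mul_le_mul_of_nonneg_right (mul_le_mul_of_nonneg_left hfs ?_) hFF
          positivity
      _ = ((wt k f : ℝ)) ^ n * FF k lam f := by rw [← pow_succ, Nat.sub_add_cancel hn]
  have hsplit : UU k lam n = ∑ s : Fin k, ((s.1 + 1 : ℕ) : ℝ) *
      ∑' f : Fin k → ℕ, ((wt k f : ℝ)) ^ (n - 1) * (f s : ℝ) * FF k lam f := by
    have hterm : ∀ f : Fin k → ℕ, ((wt k f : ℝ)) ^ n * FF k lam f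
        = ∑ s : Fin k, ((s.1 + 1 : ℕ) : ℝ)
            * (((wt k f : ℝ)) ^ (n - 1) * (f s : ℝ) * FF k lam f) := by
      intro f
      have hw : (wt k f : ℝ) = ∑ s : Fin k, ((s.1 + 1 : ℕ) : ℝ) * (f s : ℝ) := by
        rw [wt]; push_cast; rfl
      calc ((wt k f : ℝ)) ^ n * FF k lam f
          = ((wt k f : ℝ)) ^ (n - 1) * (wt k f : ℝ) * FF k lam f := by
            rw [← pow_succ, Nat.sub_add_cancel hn]
        _ = ∑ s : Fin k, ((s.1 + 1 : ℕ) : ℝ)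
            * (((wt k f : ℝ)) ^ (n - 1) * (f s : ℝ) * FF k lam f) := by
            rw [hw, Finset.mul_sum, Finset.sum_mul]
            exact Finset.sum_congr rfl fun s _ => by push_cast; ring
    rw [UU, tsum_congr hterm,
      Summable.tsum_finsetSum (fun s _ => (hsum_H s).mul_left (((s.1 + 1 : ℕ) : ℝ)))]
    exact Finset.sum_congr rfl fun s _ => tsum_mul_left
  -- Step 2: apply shift lemma
  have hshift : ∀ s : Fin k,
      ∑' f : Fin k → ℕ, ((wt k f : ℝ)) ^ (n - 1) * (f s : ℝ) * FF k lam f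
      = lam * ∑ i ∈ Finset.range n,
          (Nat.choose (n - 1) i : ℝ) * ((s.1 + 1 : ℕ) : ℝ) ^ i * UU k lam (n - 1 - i) := by
    intro s
    have := shift_lemma k hk0 hlam s (n - 1)
    rwa [Nat.sub_add_cancel hn] at this
  have hstep : UU k lam n = lam * ∑ i ∈ Finset.range n, (Nat.choose (n - 1) i : ℝ)
      * (powerSum k (i + 1) : ℝ) * UU k lam (n - 1 - i) := by
    rw [hsplit, Finset.sum_congr rfl fun s _ => by rw [hshift s]]
    calc ∑ s : Fin k, ((s.1 + 1 : ℕ) : ℝ) * (lam * ∑ i ∈ Finset.range n,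
            (Nat.choose (n - 1) i : ℝ) * ((s.1 + 1 : ℕ) : ℝ) ^ i * UU k lam (n - 1 - i))
        = lam * ∑ s : Fin k, ∑ i ∈ Finset.range n,
            (Nat.choose (n - 1) i : ℝ) * ((s.1 + 1 : ℕ) : ℝ) ^ (i + 1) * UU k lam (n - 1 - i) := by
          rw [Finset.mul_sum]
          refine Finset.sum_congr rfl fun s _ => ?_
          rw [Finset.mul_sum, Finset.mul_sum, Finset.mul_sum]
          refine Finset.sum_congr rfl fun i _ => ?_
          rw [pow_succ]; ring
      _ = lam * ∑ i ∈ Finset.range n, (Nat.choose (n - 1) i : ℝ)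
            * (powerSum k (i + 1) : ℝ) * UU k lam (n - 1 - i) := by
          rw [Finset.sum_comm]
          congr 1
          refine Finset.sum_congr rfl fun i _ => ?_
          rw [← fin_powerSum k (i + 1), Finset.mul_sum, Finset.sum_mul]
  calc rawMoment k lam n = Real.exp (-(k * lam)) * UU k lam n := rawMoment_eq k hk0 hlam n
    _ = lam * ∑ i ∈ Finset.range n, (Nat.choose (n - 1) i : ℝ) * (powerSum k (i + 1) : ℝ)
          * (Real.exp (-(k * lam)) * UU k lam (n - 1 - i)) := by
        rw [hstep, Finset.mul_sum, Finset.mul_sum, Finset.mul_sum]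
        refine Finset.sum_congr rfl fun i _ => ?_
        ring
    _ = lam * ∑ j ∈ Finset.Icc 1 n, (Nat.choose (n - 1) (j - 1) : ℝ) * (powerSum k j : ℝ)
          * rawMoment k lam (n - j) := by
        congr 1
        refine Finset.sum_bij' (fun i _ => i + 1) (fun j _ => j - 1) ?_ ?_ ?_ ?_ ?_
        · intro a ha; simp only [Finset.mem_range] at ha; simp only [Finset.mem_Icc]; omega
        · intro a ha; simp only [Finset.mem_Icc] at ha; simp only [Finset.mem_range]; omega
        · intro a ha; omega
        · intro a ha; simp only [Finset.mem_Icc] at ha; omega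
        · intro a ha
          simp only [Finset.mem_range] at ha
          rw [rawMoment_eq k hk0 hlam (n - (a + 1))]
          have h1 : (a + 1) - 1 = a := rfl
          have h2 : n - (a + 1) = n - 1 - a := by omega
          rw [h1, h2]
end

section
/- For every integer k ≥ 1 and every real λ > 0, the mean of the Poisson distribution of order k is μ(k,λ) = Σ_{m=0}^∞ m · P_m(k,λ) = k(k+1)λ/2. -/
open scoped BigOperators

/-!
`P_n(k,λ)` is the law of `X₁ + 2X₂ + ⋯ + kX_k` for independent Poisson(`λ`) variables `X_j`, so
its mean is `λ(1 + 2 + ⋯ + k)`. Concretely, multiplying the `k` absolutely convergent series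
`Σ_n λⁿ/n! = e^λ` and `Σ_n n λⁿ/n! = λ e^λ` gives `Σ_f f_j ∏_i λ^{f_i}/f_i! = λ e^{kλ}` over
`f : Fin k → ℕ`; summing against the weights `j + 1` and then regrouping the summands along the
fibres of `f ↦ Σ_j (j+1) f_j` yields the series of `m P_m(k,λ)`.
-/

open Finset Real Nat

section PiProd

variable {ι : Type*}

theorem summable_pi_prod_of_nonneg {n : ℕ} {a : Fin n → ι → ℝ} (ha : ∀ i m, 0 ≤ a i m)
    (hs : ∀ i, Summable (a i)) : Summable fun f : Fin n → ι => ∏ i, a i (f i) := by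
  induction n with
  | zero => exact (hasSum_fintype _).summable
  | succ n ih =>
    have htail := ih (fun i m => ha i.succ m) (fun i => hs i.succ)
    have hmul := (hs 0).mul_of_nonneg htail (ha 0) fun f => prod_nonneg fun i _ => ha i.succ _
    refine ((Fin.consEquiv fun _ => ι).summable_iff).1 (hmul.congr fun p => ?_)
    simp [Fin.prod_univ_succ]

theorem hasSum_pi_prod {R : Type*} [NormedCommRing R] [NormOneClass R] [CompleteSpace R]
    {n : ℕ} {a : Fin n → ι → R} {s : Fin n → R} (ha : ∀ i, Summable fun m => ‖a i m‖)
    (hs : ∀ i, HasSum (a i) (s i)) :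
    HasSum (fun f : Fin n → ι => ∏ i, a i (f i)) (∏ i, s i) := by
  induction n with
  | zero => simp
  | succ n ih =>
    have htail := ih (fun i => ha i.succ) (fun i => hs i.succ)
    have hbound : Summable fun f : Fin n → ι => ∏ i, ‖a i.succ (f i)‖ :=
      summable_pi_prod_of_nonneg (a := fun i m => ‖a i.succ m‖) (fun _ _ => norm_nonneg _)
        fun i => ha i.succ
    have htail_norm : Summable fun f : Fin n → ι => ‖∏ i, a i.succ (f i)‖ :=
      .of_nonneg_of_le (fun _ => norm_nonneg _) (fun f => norm_prod_le _ _) hbound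
    have hprod := summable_mul_of_summable_norm (ha 0) htail_norm
    have hmul := (hs 0).mul htail hprod
    rw [Fin.prod_univ_succ]
    refine ((Fin.consEquiv fun _ => ι).hasSum_iff).1 (hmul.congr_fun fun p => ?_)
    simp [Fin.prod_univ_succ]

end PiProd

theorem hasSum_pow_div_factorial (x : ℝ) : HasSum (fun n => x ^ n / n !) (exp x) := by
  simpa [exp_eq_exp_ℝ] using NormedSpace.expSeries_div_hasSum_exp x

theorem hasSum_nat_mul_pow_div_factorial (x : ℝ) :
    HasSum (fun n => n * (x ^ n / n !)) (x * exp x) := by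
  rw [← hasSum_nat_add_iff' 1]
  simp only [Finset.range_one, Finset.sum_singleton, CharP.cast_eq_zero, zero_mul, sub_zero]
  refine ((hasSum_pow_div_factorial x).mul_left x).congr_fun fun n => ?_
  rw [factorial_succ]
  push_cast
  field_simp
  ring

theorem Fin.sum_val_add_one_eq (k : ℕ) : ∑ j : Fin k, ((j : ℝ) + 1) = k * (k + 1) / 2 := by
  induction k with
  | zero => simp
  | succ k ih =>
    rw [Fin.sum_univ_castSucc]
    simp only [Fin.val_castSucc, Fin.val_last, ih]
    push_cast
    ring

/-- `n₁ + 2 n₂ + ⋯ + k n_k`, where `f j` stands for `n_{j+1}`. -/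
def indexWeightedSum {k : ℕ} (f : Fin k → ℕ) : ℕ := ∑ j : Fin k, (j.1 + 1) * f j

theorem le_indexWeightedSum {k : ℕ} (f : Fin k → ℕ) (j : Fin k) : f j ≤ indexWeightedSum f :=
  calc f j ≤ (j.1 + 1) * f j := Nat.le_mul_of_pos_left _ j.1.succ_pos
    _ ≤ indexWeightedSum f := single_le_sum (f := fun i : Fin k => (i.1 + 1) * f i)
        (fun _ _ => Nat.zero_le _) (mem_univ j)

theorem coe_filter_piFinset_range_eq_preimage (k m : ℕ) :
    (filter (fun f : Fin k → ℕ => indexWeightedSum f = m)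
        (Fintype.piFinset fun _ => range (m + 1)) : Set (Fin k → ℕ)) =
      indexWeightedSum ⁻¹' {m} := by
  ext f
  simp only [coe_filter, Fintype.mem_piFinset, mem_range, Set.mem_ofPred_eq, Set.mem_preimage,
    Set.mem_singleton_iff, and_iff_right_iff_imp]
  rintro rfl j
  exact Nat.lt_succ_of_le (le_indexWeightedSum f j)

theorem poissonK_eq_tsum (k : ℕ) (lam : ℝ) (m : ℕ) :
    poissonK k lam m = exp (-(k * lam)) *
      ∑' f : (indexWeightedSum ⁻¹' {m} : Set (Fin k → ℕ)), ∏ j, lam ^ f.1 j / (f.1 j)! := by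
  rw [← coe_filter_piFinset_range_eq_preimage,
    tsum_subtype' _ fun f : Fin k → ℕ => ∏ j, lam ^ f j / (f j)!]
  rfl

theorem hasSum_apply_mul_prod_pow_div_factorial (k : ℕ) (lam : ℝ) (j : Fin k) :
    HasSum (fun f : Fin k → ℕ => (f j : ℝ) * ∏ i, lam ^ f i / (f i)!) (lam * exp lam ^ k) := by
  have hnorm : ∀ i, Summable fun n : ℕ => ‖(if i = j then (n : ℝ) else 1) * (lam ^ n / n !)‖ := by
    intro i
    split_ifs
    · simpa [abs_div] using (hasSum_nat_mul_pow_div_factorial |lam|).summable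
    · simpa [abs_div] using (hasSum_pow_div_factorial |lam|).summable
  have hsum : ∀ i, HasSum (fun n : ℕ => (if i = j then (n : ℝ) else 1) * (lam ^ n / n !))
      ((if i = j then lam else 1) * exp lam) := by
    intro i
    split_ifs
    · simpa using hasSum_nat_mul_pow_div_factorial lam
    · simpa using hasSum_pow_div_factorial lam
  simpa only [prod_mul_distrib, prod_ite_eq', mem_univ, if_true, prod_const, Finset.card_fin]
    using hasSum_pi_prod hnorm hsum

theorem hasSum_indexWeightedSum_mul_prod_pow_div_factorial (k : ℕ) (lam : ℝ) :
    HasSum (fun f : Fin k → ℕ => (indexWeightedSum f : ℝ) * ∏ i, lam ^ f i / (f i)!)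
      (k * (k + 1) / 2 * (lam * exp lam ^ k)) := by
  have h := hasSum_sum (s := univ) fun (j : Fin k) _ =>
    (hasSum_apply_mul_prod_pow_div_factorial k lam j).mul_left ((j : ℝ) + 1)
  rw [← sum_mul, Fin.sum_val_add_one_eq] at h
  refine h.congr_fun fun f => ?_
  push_cast [indexWeightedSum]
  rw [sum_mul]
  exact sum_congr rfl fun j _ => by ring

theorem poissonK_mean_general (k : ℕ) (lam : ℝ) :
    HasSum (fun m : ℕ => (m : ℝ) * poissonK k lam m) (k * (k + 1) * lam / 2) := by
  have hnormalize : exp (-(k * lam)) * (k * (k + 1) / 2 * (lam * exp lam ^ k)) =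
      k * (k + 1) * lam / 2 := by
    rw [← exp_nat_mul, exp_neg]
    field_simp
  have h := ((hasSum_indexWeightedSum_mul_prod_pow_div_factorial k lam).mul_left
    (exp (-(k * lam)))).tsum_fiberwise indexWeightedSum
  rw [hnormalize] at h
  refine h.congr_fun fun m => ?_
  rw [poissonK_eq_tsum, ← tsum_mul_left, ← tsum_mul_left]
  refine tsum_congr fun f => ?_
  rw [f.2]
  ring

/-- The mean of the Poisson distribution of order `k` is
`μ(k,λ) = Σ_{m=0}^∞ m·P_m(k,λ) = k(k+1)λ/2`. -/
theorem poissonK_mean (k : ℕ) (hk : 1 ≤ k) (lam : ℝ) (hlam : 0 < lam) :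
    HasSum (fun m : ℕ => (m : ℝ) * poissonK k lam m) (k * (k + 1) * lam / 2) :=
  poissonK_mean_general k lam
end

section
/- For every integer k ≥ 1 and every real λ > 0, the variance of the Poisson distribution of order k is σ²(k,λ) = Σ_{m=0}^∞ (m − μ(k,λ))² · P_m(k,λ) = k(k+1)(2k+1)λ/6, where μ(k,λ) = k(k+1)λ/2 is the mean. -/
/-!
`P(k, λ)` is the law of `S = N₁ + 2N₂ + ⋯ + kNₖ` for independent `Po(λ)` variables `Nⱼ`: grouping
configurations `f : Fin k → ℕ` along the fibres of `S` turns sums against the product weight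
`∏ⱼ Po(λ){f j}` into sums against `P_m(k, λ)`. Since `μ = λ ∑ j`, the centred variable
`S - μ = ∑ j (Nⱼ - λ)` is a linear combination of independent centred variables of variance `λ`;
the cross terms vanish, so its variance is `λ ∑ j² = k(k+1)(2k+1)λ/6`.
-/

open scoped BigOperators

open Finset ProbabilityTheory
open scoped NNReal

section PoissonMoments

variable (r : ℝ≥0)

lemma hasSum_poissonMeasure_real : HasSum (fun n ↦ Po(r).real {n}) 1 := by
  simpa only [poissonMeasure_real_singleton] using hasSum_one_poissonMeasure r

lemma poissonMeasure_real_succ (n : ℕ) :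
    ((n : ℝ) + 1) * Po(r).real {n + 1} = r * Po(r).real {n} := by
  rw [poissonMeasure_real_singleton, poissonMeasure_real_singleton, Nat.factorial_succ]
  push_cast
  field_simp
  ring

variable {r}

lemma HasSum.natCast_mul_poissonMeasure_real {g : ℕ → ℝ} {a : ℝ}
    (h : HasSum (fun n ↦ g (n + 1) * Po(r).real {n}) a) :
    HasSum (fun n : ℕ ↦ n * g n * Po(r).real {n}) (r * a) := by
  refine (hasSum_nat_add_iff' 1).1 ?_
  simpa using (h.mul_left (r : ℝ)).congr_fun fun n ↦ by
    rw [← mul_left_comm, ← poissonMeasure_real_succ]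
    ring

variable (r)

lemma hasSum_natCast_mul_poissonMeasure_real :
    HasSum (fun n : ℕ ↦ n * Po(r).real {n}) r := by
  have h := HasSum.natCast_mul_poissonMeasure_real (g := fun _ ↦ 1)
    ((hasSum_poissonMeasure_real r).congr_fun fun n ↦ one_mul _)
  rw [mul_one] at h
  exact h.congr_fun fun n ↦ by ring

lemma hasSum_natCast_sq_mul_poissonMeasure_real :
    HasSum (fun n : ℕ ↦ (n : ℝ) ^ 2 * Po(r).real {n}) (r * (r + 1)) := by
  have h := (hasSum_natCast_mul_poissonMeasure_real r).add (hasSum_poissonMeasure_real r)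
  refine (HasSum.natCast_mul_poissonMeasure_real (g := Nat.cast) ?_).congr_fun fun n ↦ by ring
  exact h.congr_fun fun n ↦ by push_cast; ring

lemma hasSum_sub_mul_poissonMeasure_real :
    HasSum (fun n : ℕ ↦ (n - r : ℝ) * Po(r).real {n}) 0 := by
  have h := (hasSum_natCast_mul_poissonMeasure_real r).sub
    ((hasSum_poissonMeasure_real r).mul_left (r : ℝ))
  rw [mul_one, sub_self] at h
  exact h.congr_fun fun n ↦ by ring

lemma hasSum_sub_sq_mul_poissonMeasure_real :
    HasSum (fun n : ℕ ↦ (n - r : ℝ) ^ 2 * Po(r).real {n}) r := by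
  have h := ((hasSum_natCast_sq_mul_poissonMeasure_real r).sub
    ((hasSum_natCast_mul_poissonMeasure_real r).mul_left (2 * r : ℝ))).add
    ((hasSum_poissonMeasure_real r).mul_left ((r : ℝ) ^ 2))
  rw [show r * (r + 1) - 2 * r * r + (r : ℝ) ^ 2 * 1 = r by ring] at h
  exact h.congr_fun fun n ↦ by ring

end PoissonMoments

section ProductSeries

variable {R β : Type*} [NormedCommRing R]

theorem summable_norm_prod_pi {k : ℕ} {g : Fin k → β → R}
    (hg : ∀ i, Summable fun b ↦ ‖g i b‖) : Summable fun f : Fin k → β ↦ ‖∏ i, g i (f i)‖ := by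
  induction k with
  | zero => exact .of_finite
  | succ k ih =>
    have h := (hg 0).mul_norm (ih fun i : Fin k ↦ hg i.succ)
    refine ((Fin.consEquiv fun _ ↦ β).summable_iff).1 (h.congr fun p ↦ ?_)
    simp [Fin.consEquiv, Fin.prod_univ_succ]

variable [CompleteSpace R]

theorem hasSum_prod_pi {k : ℕ} {g : Fin k → β → R} {a : Fin k → R}
    (hg : ∀ i, HasSum (g i) (a i)) (hg' : ∀ i, Summable fun b ↦ ‖g i b‖) :
    HasSum (fun f : Fin k → β ↦ ∏ i, g i (f i)) (∏ i, a i) := by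
  induction k with
  | zero => simp
  | succ k ih =>
    have h1 : Summable fun b ↦ ‖g 0 b‖ := hg' 0
    have h2 : Summable fun f : Fin k → β ↦ ‖∏ i, g i.succ (f i)‖ :=
      summable_norm_prod_pi fun i ↦ hg' i.succ
    have hs := summable_mul_of_summable_norm h1 h2
    have h := (hg 0).mul (ih (fun i ↦ hg i.succ) fun i ↦ hg' i.succ) hs
    rw [Fin.prod_univ_succ]
    refine ((Fin.consEquiv fun _ ↦ β).hasSum_iff).1 (h.congr_fun fun p ↦ ?_)
    simp [Fin.consEquiv, Fin.prod_univ_succ]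

end ProductSeries

section Covariance

variable {β : Type*} {p h : β → ℝ} {v : ℝ}

theorem hasSum_mul_mul_prod_pi (hp₀ : ∀ b, 0 ≤ p b) (hp : HasSum p 1)
    (hh : HasSum (fun b ↦ h b * p b) 0) (hh₂ : HasSum (fun b ↦ h b ^ 2 * p b) v)
    {k : ℕ} (i j : Fin k) :
    HasSum (fun f : Fin k → β ↦ h (f i) * h (f j) * ∏ l, p (f l)) (if i = j then v else 0) := by
  set g : Fin k → β → ℝ := fun l b ↦ (if l = i then h b else 1) * (if l = j then h b else 1) * p b
  set a : Fin k → ℝ := fun l ↦ if l = i then (if l = j then v else 0) else if l = j then 0 else 1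
  have hg : ∀ l, HasSum (g l) (a l) := by
    intro l
    by_cases hi : l = i <;> by_cases hj : l = j
    · subst hi hj; simpa [g, a, ← sq] using hh₂
    · subst hi; simpa [g, a, hj] using hh
    · subst hj; simpa [g, a, hi] using hh
    · simpa [g, a, hi, hj] using hp
  have hg' : ∀ l, Summable fun b ↦ ‖g l b‖ := by
    refine fun l ↦ .of_nonneg_of_le (fun _ ↦ norm_nonneg _) (fun b ↦ ?_)
      (hp.summable.add hh₂.summable)
    have := hp₀ b
    simp only [g, Real.norm_eq_abs, abs_mul, abs_of_nonneg this]
    split_ifs <;> simp only [abs_one, one_mul, mul_one, abs_mul_abs_self] <;>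
      nlinarith [mul_nonneg this (sq_nonneg (|h b| - 1)), mul_nonneg (abs_nonneg (h b)) this,
        sq_abs (h b)]
  have hprod : ∏ l, a l = if i = j then v else 0 := by
    split_ifs with hij
    · subst hij; simp +contextual [a]
    · exact prod_eq_zero (mem_univ i) (by simp [a, hij])
  rw [← hprod]
  refine (hasSum_prod_pi hg hg').congr_fun fun f ↦ ?_
  simp only [g, prod_mul_distrib, Fintype.prod_ite_eq']

theorem hasSum_sq_sum_mul_prod_pi (hp₀ : ∀ b, 0 ≤ p b) (hp : HasSum p 1)
    (hh : HasSum (fun b ↦ h b * p b) 0) (hh₂ : HasSum (fun b ↦ h b ^ 2 * p b) v)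
    {k : ℕ} (c : Fin k → ℝ) :
    HasSum (fun f : Fin k → β ↦ (∑ i, c i * h (f i)) ^ 2 * ∏ l, p (f l)) (v * ∑ i, c i ^ 2) := by
  have H := hasSum_sum (s := univ) fun i _ ↦ hasSum_sum (s := univ) fun j _ ↦
    (hasSum_mul_mul_prod_pi hp₀ hp hh hh₂ i j).mul_left (c i * c j)
  simp only [mul_ite, mul_zero, sum_ite_eq, mem_univ, if_true] at H
  rw [mul_sum, show ∑ i, v * c i ^ 2 = ∑ i, c i * c i * v from sum_congr rfl fun i _ ↦ by ring]
  refine H.congr_fun fun f ↦ ?_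
  rw [sq, sum_mul_sum, sum_mul]
  refine sum_congr rfl fun i _ ↦ ?_
  rw [sum_mul]
  exact sum_congr rfl fun j _ ↦ by ring

end Covariance

section PoissonOfOrder

lemma poissonK_eq_sum_prod (k : ℕ) (r : ℝ≥0) (m : ℕ) :
    poissonK k r m = ∑ f ∈ {f ∈ Fintype.piFinset fun _ : Fin k ↦ range (m + 1) |
      ∑ j : Fin k, (j.1 + 1) * f j = m}, ∏ j, Po(r).real {f j} := by
  simp only [poissonK, poissonMeasure_real_singleton, mul_sum, mul_div_assoc, prod_mul_distrib,
    prod_const, card_univ, Fintype.card_fin, ← Real.exp_nat_mul]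
  ring_nf

theorem preimage_sum_mul_singleton (k m : ℕ) :
    (fun f : Fin k → ℕ ↦ ∑ j : Fin k, (j.1 + 1) * f j) ⁻¹' {m} =
      ↑{f ∈ Fintype.piFinset fun _ : Fin k ↦ range (m + 1) | ∑ j : Fin k, (j.1 + 1) * f j = m} := by
  ext f
  simp only [Set.mem_preimage, Set.mem_singleton_iff, coe_filter, Fintype.mem_piFinset, mem_range,
    Nat.lt_succ_iff]
  refine ⟨fun hf ↦ ⟨fun j ↦ hf ▸ ?_, hf⟩, And.right⟩
  exact (Nat.le_mul_of_pos_left _ j.1.succ_pos).trans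
    (single_le_sum (f := fun i : Fin k ↦ (i.1 + 1) * f i) (fun i _ ↦ Nat.zero_le _) (mem_univ j))

theorem HasSum.mul_poissonK {k : ℕ} {r : ℝ≥0} {F : ℕ → ℝ} {a : ℝ}
    (h : HasSum (fun f : Fin k → ℕ ↦ F (∑ j : Fin k, (j.1 + 1) * f j) * ∏ j, Po(r).real {f j}) a) :
    HasSum (fun m ↦ F m * poissonK k r m) a := by
  refine (h.tsum_fiberwise fun f ↦ ∑ j : Fin k, (j.1 + 1) * f j).congr_fun fun m ↦ ?_
  set G := fun f : Fin k → ℕ ↦ F (∑ j : Fin k, (j.1 + 1) * f j) * ∏ j, Po(r).real {f j}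
  rw [tsum_congr_set_coe G (preimage_sum_mul_singleton k m), Finset.tsum_subtype' _ G,
    poissonK_eq_sum_prod, mul_sum]
  exact sum_congr rfl fun f hf ↦ by simp only [G, (mem_filter.1 hf).2]

end PoissonOfOrder

lemma sum_range_natCast_add_one (n : ℕ) :
    ∑ i ∈ range n, ((i : ℝ) + 1) = (n : ℝ) * (n + 1) / 2 := by
  induction n with
  | zero => simp
  | succ n ih => rw [sum_range_succ, ih]; push_cast; ring

lemma sum_range_natCast_add_one_sq (n : ℕ) :
    ∑ i ∈ range n, ((i : ℝ) + 1) ^ 2 = (n : ℝ) * (n + 1) * (2 * n + 1) / 6 := by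
  induction n with
  | zero => simp
  | succ n ih => rw [sum_range_succ, ih]; push_cast; ring

theorem poissonK_variance_general (k : ℕ) (lam : ℝ) (hlam : 0 < lam) :
    HasSum (fun m : ℕ => ((m : ℝ) - k * (k + 1) * lam / 2) ^ 2 * poissonK k lam m)
      (k * (k + 1) * (2 * k + 1) * lam / 6) := by
  lift lam to ℝ≥0 using hlam.le
  have hcentre : ∀ f : Fin k → ℕ, ((∑ j : Fin k, (j.1 + 1) * f j : ℕ) - k * (k + 1) * lam / 2 : ℝ)
      = ∑ j : Fin k, ((j : ℝ) + 1) * (f j - lam) := by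
    intro f
    rw [mul_div_right_comm, ← sum_range_natCast_add_one,
      ← Fin.sum_univ_eq_sum_range (fun j ↦ (j : ℝ) + 1), sum_mul]
    push_cast
    rw [← sum_sub_distrib]
    exact sum_congr rfl fun j _ ↦ by ring
  have hvar := hasSum_sq_sum_mul_prod_pi (fun _ ↦ MeasureTheory.measureReal_nonneg)
    (hasSum_poissonMeasure_real lam) (hasSum_sub_mul_poissonMeasure_real lam)
    (hasSum_sub_sq_mul_poissonMeasure_real lam) fun j : Fin k ↦ (j : ℝ) + 1
  rw [Fin.sum_univ_eq_sum_range (fun j ↦ ((j : ℝ) + 1) ^ 2), sum_range_natCast_add_one_sq,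
    mul_comm, div_mul_eq_mul_div] at hvar
  exact HasSum.mul_poissonK (hvar.congr_fun fun f ↦ by rw [hcentre])

/-- The variance of the Poisson distribution of order `k` is
`σ²(k,λ) = Σ_{m=0}^∞ (m − μ(k,λ))²·P_m(k,λ) = k(k+1)(2k+1)λ/6`, where
`μ(k,λ) = k(k+1)λ/2` is the mean. -/
theorem poissonK_variance (k : ℕ) (hk : 1 ≤ k) (lam : ℝ) (hlam : 0 < lam) :
    HasSum (fun m : ℕ => ((m : ℝ) - k * (k + 1) * lam / 2) ^ 2 * poissonK k lam m)
      (k * (k + 1) * (2 * k + 1) * lam / 6) :=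
  poissonK_variance_general k lam hlam
end

section
/- For every integer k ≥ 1, every real λ > 0, and every integer n ≥ 2, the n-th central moment of the Poisson distribution of order k satisfies the recurrence 𝑀̃_n(k,λ) = λ · Σ_{j=2}^{n} C(n−1, j−1) · 𝓢_j(k) · 𝑀̃_{n−j}(k,λ), where 𝑀̃_0(k,λ) = 1 and 𝑀̃_1(k,λ) = 0. -/
open scoped BigOperators

/-- The `n`-th central moment `M̃_n(k,λ) = Σ_{m=0}^∞ (m − μ(k,λ))^n·P_m(k,λ)`,
where `μ(k,λ) = k(k+1)λ/2` is the mean, with the conventions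
`M̃_0(k,λ) = 1` and `M̃_1(k,λ) = 0`. -/
noncomputable def centralMoment (k : ℕ) (lam : ℝ) (n : ℕ) : ℝ :=
  if n = 0 then 1
  else if n = 1 then 0
  else ∑' m : ℕ, ((m : ℝ) - k * (k + 1) * lam / 2) ^ n * poissonK k lam m

/-!
Write `P_m(k,λ) = e^{-kλ} Σ_{N(f) = m} W(f)` with `N(f) = Σ_j (j+1) f_j` and
`W(f) = ∏_j λ^{f_j}/f_j!` for `f : Fin k → ℕ`, so that every moment of the distribution is a sum
over all of `ℕ^k` against `W`, which converges absolutely because `Σ_f r^{N(f)} |W(f)| < ∞` for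
every `r`. Each coordinate satisfies the Poisson identity
`Σ_f f_j H(f) W(f) = λ Σ_f H(f + e_j) W(f)`. Writing
`(N - c)^{m+1} = Σ_j (j+1) f_j (N - c)^m - c (N - c)^m`, applying this identity and expanding
`(N + j + 1 - c)^m` binomially gives a recurrence for the moments about any centre `c`; at the mean
`c = λ 𝓢_1(k)` its top term cancels against `c (N - c)^m`, which leaves the stated recurrence.
-/
open Finset Filter

theorem hasSum_prod_of_summable_norm {ι : Type*} [Fintype ι] {a : ι → ℕ → ℝ}
    (ha : ∀ i, Summable fun n => ‖a i n‖) :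
    HasSum (fun f : ι → ℕ => ∏ i, a i (f i)) (∏ i, ∑' n, a i n) := by
  classical
  let box : ℕ → Finset (ι → ℕ) := fun N => Fintype.piFinset fun _ => range N
  have sum_box (b : ι → ℕ → ℝ) (N : ℕ) :
      ∑ f ∈ box N, ∏ i, b i (f i) = ∏ i, ∑ n ∈ range N, b i n :=
    (prod_univ_sum _ _).symm
  have box_atTop : Tendsto box atTop atTop := by
    refine tendsto_atTop_finset_of_monotone
      (fun M N h => Fintype.piFinset_subset _ _ fun _ => range_subset_range.2 h) fun f => ?_
    refine ⟨∑ i, f i + 1, Fintype.mem_piFinset.2 fun i => mem_range.2 ?_⟩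
    exact Nat.lt_succ_of_le (single_le_sum (fun i _ => Nat.zero_le (f i)) (mem_univ i))
  have summable : Summable fun f : ι → ℕ => ∏ i, a i (f i) := by
    refine Summable.of_norm <| summable_of_sum_le (c := ∏ i, ∑' n, ‖a i n‖)
      (fun _ => norm_nonneg _) fun u => ?_
    obtain ⟨N, hN⟩ := (box_atTop.eventually_ge_atTop u).exists
    calc ∑ f ∈ u, ‖∏ i, a i (f i)‖ ≤ ∑ f ∈ box N, ∏ i, ‖a i (f i)‖ := by
          simp_rw [norm_prod]
          exact sum_le_sum_of_subset_of_nonneg hN fun _ _ _ => by positivity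
      _ = ∏ i, ∑ n ∈ range N, ‖a i n‖ := sum_box (fun i n => ‖a i n‖) N
      _ ≤ ∏ i, ∑' n, ‖a i n‖ := prod_le_prod (fun _ _ => by positivity)
          fun i _ => (ha i).sum_le_tsum _ fun _ _ => norm_nonneg _
  have box_limit := summable.hasSum.comp box_atTop
  simp only [Function.comp_def, sum_box] at box_limit
  have tsum_eq := tendsto_nhds_unique box_limit
    (tendsto_finsetProd _ fun i _ => (ha i).of_norm.hasSum.tendsto_sum_nat)
  exact tsum_eq ▸ summable.hasSum

namespace PoissonOrder

variable {k : ℕ}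

def weightedSum (k : ℕ) (f : Fin k → ℕ) : ℕ := ∑ j : Fin k, (j.1 + 1) * f j

noncomputable def poissonWeight (k : ℕ) (lam : ℝ) (f : Fin k → ℕ) : ℝ :=
  ∏ j : Fin k, lam ^ f j / (f j).factorial

theorem abs_poissonWeight (lam : ℝ) (f : Fin k → ℕ) :
    |poissonWeight k lam f| = poissonWeight k |lam| f := by
  simp only [poissonWeight, abs_prod, abs_div, abs_pow, Nat.abs_cast]

theorem hasSum_pow_weightedSum_mul_poissonWeight (r lam : ℝ) :
    HasSum (fun f : Fin k → ℕ => r ^ weightedSum k f * poissonWeight k lam f)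
      (∏ j : Fin k, Real.exp (r ^ (j.1 + 1) * lam)) := by
  have factor (f : Fin k → ℕ) : r ^ weightedSum k f * poissonWeight k lam f =
      ∏ j : Fin k, (r ^ (j.1 + 1) * lam) ^ f j / (f j).factorial := by
    simp only [weightedSum, poissonWeight, ← prod_pow_eq_pow_sum, ← prod_mul_distrib, mul_pow,
      pow_mul, mul_div_assoc]
  simp only [factor, Real.exp_eq_exp_ℝ, NormedSpace.exp_eq_tsum_div]
  refine hasSum_prod_of_summable_norm fun j => ?_
  simpa [abs_pow, abs_div] using Real.summable_pow_div_factorial |r ^ (j.1 + 1) * lam|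

theorem hasSum_poissonWeight (lam : ℝ) :
    HasSum (poissonWeight k lam) (Real.exp (k * lam)) := by
  simpa [Real.exp_nat_mul] using hasSum_pow_weightedSum_mul_poissonWeight (k := k) 1 lam

theorem summable_mul_poissonWeight_of_abs_le (lam : ℝ) {P : (Fin k → ℕ) → ℝ} {C R : ℝ}
    (hP : ∀ f, |P f| ≤ C * R ^ weightedSum k f) :
    Summable fun f => P f * poissonWeight k lam f := by
  refine Summable.of_norm_bounded
    (((hasSum_pow_weightedSum_mul_poissonWeight R |lam|).summable).mul_left C) fun f => ?_
  rw [Real.norm_eq_abs, abs_mul, abs_poissonWeight, ← mul_assoc]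
  exact mul_le_mul_of_nonneg_right (hP f) (abs_poissonWeight lam f ▸ abs_nonneg _)

theorem abs_natCast_sub_le (x : ℕ) (c : ℝ) : |(x : ℝ) - c| ≤ (1 + |c|) * 2 ^ x := by
  have hx : (x : ℝ) ≤ 2 ^ x := by exact_mod_cast Nat.lt_two_pow_self.le
  have h1 : (1 : ℝ) ≤ 2 ^ x := one_le_pow₀ (by norm_num)
  rw [abs_le]
  constructor <;> nlinarith [abs_nonneg c, le_abs_self c, neg_abs_le c]

theorem natCast_le_one_add_abs_mul (x : ℕ) (c : ℝ) : (x : ℝ) ≤ (1 + |c|) * 2 ^ x := by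
  have hx : (x : ℝ) ≤ 2 ^ x := by exact_mod_cast Nat.lt_two_pow_self.le
  nlinarith [abs_nonneg c, (by positivity : (0 : ℝ) ≤ 2 ^ x)]

theorem coord_le_weightedSum (f : Fin k → ℕ) (j : Fin k) : f j ≤ weightedSum k f :=
  (Nat.le_mul_of_pos_left _ j.1.succ_pos).trans
    (single_le_sum (f := fun i : Fin k => (i.1 + 1) * f i) (fun _ _ => Nat.zero_le _) (mem_univ j))

noncomputable def weightMoment (k : ℕ) (lam c : ℝ) (n : ℕ) : ℝ :=
  ∑' f : Fin k → ℕ, ((weightedSum k f : ℝ) - c) ^ n * poissonWeight k lam f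

theorem summable_weightMoment (lam c : ℝ) (n : ℕ) :
    Summable fun f : Fin k → ℕ => ((weightedSum k f : ℝ) - c) ^ n * poissonWeight k lam f := by
  refine summable_mul_poissonWeight_of_abs_le lam (C := (1 + |c|) ^ n) (R := 2 ^ n) fun f => ?_
  calc |((weightedSum k f : ℝ) - c) ^ n| ≤ ((1 + |c|) * 2 ^ weightedSum k f) ^ n := by
        rw [abs_pow]; exact pow_le_pow_left₀ (abs_nonneg _) (abs_natCast_sub_le _ _) n
    _ = (1 + |c|) ^ n * (2 ^ n) ^ weightedSum k f := by
        rw [mul_pow, ← pow_mul, ← pow_mul, mul_comm n]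

theorem summable_coord_mul_weightMoment (lam c : ℝ) (n : ℕ) (j : Fin k) :
    Summable fun f : Fin k → ℕ =>
      (f j : ℝ) * ((weightedSum k f : ℝ) - c) ^ n * poissonWeight k lam f := by
  refine summable_mul_poissonWeight_of_abs_le lam (C := (1 + |c|) ^ (n + 1)) (R := 2 ^ (n + 1))
    fun f => ?_
  have hcoord : (f j : ℝ) ≤ weightedSum k f := by exact_mod_cast coord_le_weightedSum f j
  calc |(f j : ℝ) * ((weightedSum k f : ℝ) - c) ^ n|
        ≤ ((1 + |c|) * 2 ^ weightedSum k f) * ((1 + |c|) * 2 ^ weightedSum k f) ^ n := by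
        rw [abs_mul, abs_pow, Nat.abs_cast]
        exact mul_le_mul (hcoord.trans (natCast_le_one_add_abs_mul _ c))
          (pow_le_pow_left₀ (abs_nonneg _) (abs_natCast_sub_le _ _) n) (by positivity)
          (by positivity)
    _ = (1 + |c|) ^ (n + 1) * (2 ^ (n + 1)) ^ weightedSum k f := by
        rw [← pow_succ', mul_pow, ← pow_mul, ← pow_mul, mul_comm (n + 1)]

theorem weightedSum_add_single (f : Fin k → ℕ) (j : Fin k) :
    weightedSum k (f + Pi.single j 1) = weightedSum k f + (j.1 + 1) := by
  simp [weightedSum, mul_add, sum_add_distrib, Pi.single_apply]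

theorem poissonWeight_add_single (lam : ℝ) (f : Fin k → ℕ) (j : Fin k) :
    ((f j : ℝ) + 1) * poissonWeight k lam (f + Pi.single j 1) = lam * poissonWeight k lam f := by
  classical
  set g : Fin k → ℕ := f + Pi.single j 1 with hg
  have others : ∏ i ∈ {j}ᶜ, lam ^ g i / (g i).factorial =
      ∏ i ∈ {j}ᶜ, lam ^ f i / (f i).factorial :=
    prod_congr rfl fun i hi => by
      rw [hg, Pi.add_apply, Pi.single_eq_of_ne (by simpa using hi), add_zero]
  rw [poissonWeight, poissonWeight, Fintype.prod_eq_mul_prod_compl j,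
    Fintype.prod_eq_mul_prod_compl j, others]
  simp only [hg, Pi.add_apply, Pi.single_eq_same, Nat.factorial_succ, Nat.cast_mul, pow_succ]
  field_simp
  push_cast
  ring

theorem tsum_coord_mul_poissonWeight (lam : ℝ) (j : Fin k) (H : (Fin k → ℕ) → ℝ) :
    ∑' f, (f j : ℝ) * H f * poissonWeight k lam f =
      lam * ∑' f, H (f + Pi.single j 1) * poissonWeight k lam f := by
  have shift_injective : Function.Injective fun f : Fin k → ℕ => f + Pi.single j 1 :=
    add_left_injective _
  rw [← tsum_mul_left, ← shift_injective.tsum_eq]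
  · refine tsum_congr fun f => ?_
    have := poissonWeight_add_single lam f j
    simp only [Pi.add_apply, Pi.single_eq_same, Nat.cast_add, Nat.cast_one]
    linear_combination H (f + Pi.single j 1) * this
  · intro y hy
    have hyj : y j ≠ 0 := fun h => hy (by simp [h])
    refine ⟨y - Pi.single j 1, tsub_add_cancel_of_le fun i => ?_⟩
    by_cases hi : i = j
    · subst hi; simpa [Nat.one_le_iff_ne_zero] using hyj
    · simp [Pi.single_eq_of_ne hi]

theorem tsum_coord_mul_weightMoment (lam c : ℝ) (m : ℕ) (j : Fin k) :
    ∑' f, (f j : ℝ) * ((weightedSum k f : ℝ) - c) ^ m * poissonWeight k lam f =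
      lam * ∑ i ∈ range (m + 1),
        (m.choose i : ℝ) * ((j.1 : ℝ) + 1) ^ (m - i) * weightMoment k lam c i := by
  have expand (f : Fin k → ℕ) :
      ((weightedSum k (f + Pi.single j 1) : ℝ) - c) ^ m * poissonWeight k lam f =
        ∑ i ∈ range (m + 1), (m.choose i : ℝ) * ((j.1 : ℝ) + 1) ^ (m - i) *
          (((weightedSum k f : ℝ) - c) ^ i * poissonWeight k lam f) := by
    rw [weightedSum_add_single, Nat.cast_add, Nat.cast_add, Nat.cast_one,
      add_sub_right_comm, add_pow, sum_mul]
    exact sum_congr rfl fun i _ => by ring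
  rw [tsum_coord_mul_poissonWeight, tsum_congr expand,
    Summable.tsum_finsetSum fun i _ => (summable_weightMoment lam c i).mul_left _]
  simp only [tsum_mul_left, weightMoment]

theorem powerSum_eq_sum_fin (k p : ℕ) :
    (powerSum k p : ℝ) = ∑ j : Fin k, ((j.1 : ℝ) + 1) ^ p := by
  rw [powerSum, ← Ico_add_one_right_eq_Icc, sum_Ico_eq_sum_range,
    Fin.sum_univ_eq_sum_range (fun j => ((j : ℝ) + 1) ^ p)]
  push_cast
  simp [add_comm]

theorem weightMoment_succ (lam c : ℝ) (m : ℕ) :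
    weightMoment k lam c (m + 1) =
      lam * ∑ i ∈ range (m + 1),
        (m.choose i : ℝ) * powerSum k (m + 1 - i) * weightMoment k lam c i -
      c * weightMoment k lam c m := by
  have split (f : Fin k → ℕ) :
      ((weightedSum k f : ℝ) - c) ^ (m + 1) * poissonWeight k lam f =
        ∑ j : Fin k, ((j.1 : ℝ) + 1) *
            ((f j : ℝ) * ((weightedSum k f : ℝ) - c) ^ m * poissonWeight k lam f) -
          c * (((weightedSum k f : ℝ) - c) ^ m * poissonWeight k lam f) := by
    have hsum : (weightedSum k f : ℝ) = ∑ j : Fin k, ((j.1 : ℝ) + 1) * f j := by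
      simp [weightedSum]
    have : ∑ j : Fin k, ((j.1 : ℝ) + 1) *
          ((f j : ℝ) * ((weightedSum k f : ℝ) - c) ^ m * poissonWeight k lam f) =
        (weightedSum k f : ℝ) * (((weightedSum k f : ℝ) - c) ^ m * poissonWeight k lam f) := by
      rw [hsum, sum_mul]
      exact sum_congr rfl fun j _ => by ring
    rw [this]
    ring
  have summable_coord (j : Fin k) :=
    (summable_coord_mul_weightMoment lam c m j).mul_left ((j.1 : ℝ) + 1)
  rw [weightMoment, tsum_congr split,
    Summable.tsum_sub (summable_sum fun j _ => summable_coord j)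
      ((summable_weightMoment lam c m).mul_left c),
    Summable.tsum_finsetSum fun j _ => summable_coord j, tsum_mul_left, ← weightMoment]
  simp only [tsum_mul_left, tsum_coord_mul_weightMoment]
  congr 1
  simp_rw [powerSum_eq_sum_fin, mul_sum, sum_mul]
  rw [sum_comm]
  refine sum_congr rfl fun i hi => ?_
  rw [mul_sum]
  refine sum_congr rfl fun j _ => ?_
  rw [Nat.sub_add_comm (mem_range_succ_iff.1 hi), pow_succ]
  ring

theorem mean_eq_mul_powerSum_one (k : ℕ) (lam : ℝ) :
    (k : ℝ) * (k + 1) * lam / 2 = lam * powerSum k 1 := by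
  have gauss : ∀ n : ℕ, ∑ i ∈ range n, ((i : ℝ) + 1) = n * (n + 1) / 2 := by
    intro n
    induction n with
    | zero => simp
    | succ n ih => rw [sum_range_succ, ih]; push_cast; ring
  rw [powerSum_eq_sum_fin, Fin.sum_univ_eq_sum_range (fun j => ((j : ℝ) + 1) ^ 1)]
  simp only [pow_one, gauss]
  ring

theorem weightMoment_mean_succ (lam : ℝ) (m : ℕ) :
    weightMoment k lam (k * (k + 1) * lam / 2) (m + 1) =
      lam * ∑ j ∈ Icc 2 (m + 1), (m.choose (j - 1) : ℝ) * powerSum k j *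
        weightMoment k lam (k * (k + 1) * lam / 2) (m + 1 - j) := by
  rw [weightMoment_succ, sum_range_succ, Nat.choose_self, Nat.add_sub_cancel_left,
    mean_eq_mul_powerSum_one, Nat.cast_one, one_mul, mul_add, ← mul_assoc lam,
    add_sub_cancel_right]
  congr 1
  refine sum_nbij' (fun i => m + 1 - i) (fun j => m + 1 - j) ?_ ?_ ?_ ?_ ?_ <;>
    intro i hi <;> simp only [mem_range, mem_Icc] at hi ⊢
  any_goals omega
  rw [show m + 1 - i - 1 = m - i by omega, show m + 1 - (m + 1 - i) = i by omega,
      Nat.choose_symm (by omega)]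

theorem weightMoment_zero (lam c : ℝ) : weightMoment k lam c 0 = Real.exp (k * lam) := by
  simpa [weightMoment] using (hasSum_poissonWeight lam).tsum_eq

theorem tsum_mul_poissonK (lam : ℝ) {φ : ℕ → ℝ}
    (hφ : Summable fun f : Fin k → ℕ => φ (weightedSum k f) * poissonWeight k lam f) :
    ∑' m, φ m * poissonK k lam m =
      Real.exp (-(k * lam)) * ∑' f, φ (weightedSum k f) * poissonWeight k lam f := by
  have fiber (m : ℕ) : ((Fintype.piFinset fun _ : Fin k => range (m + 1)).filter
      (fun f => weightedSum k f = m) : Set (Fin k → ℕ)) = weightedSum k ⁻¹' {m} := by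
    ext f
    simp only [coe_filter, Fintype.mem_piFinset, mem_range, Set.mem_ofPred_eq,
      Set.mem_preimage, Set.mem_singleton_iff, and_iff_right_iff_imp]
    exact fun h i => Nat.lt_succ_of_le (h ▸ coord_le_weightedSum f i)
  have term (m : ℕ) : φ m * poissonK k lam m = Real.exp (-(k * lam)) *
      ∑' f : weightedSum k ⁻¹' {m}, φ (weightedSum k f) * poissonWeight k lam f := by
    rw [← fiber, Finset.tsum_subtype' _ fun f => φ (weightedSum k f) * poissonWeight k lam f,
      poissonK, mul_sum, mul_sum, mul_sum]
    refine sum_congr rfl fun f hf => ?_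
    rw [(mem_filter.1 hf).2, poissonWeight]
    ring
  rw [tsum_congr term, tsum_mul_left, (hφ.hasSum.tsum_fiberwise _).tsum_eq]

theorem centralMoment_eq_exp_mul_weightMoment (lam : ℝ) (n : ℕ) :
    centralMoment k lam n =
      Real.exp (-(k * lam)) * weightMoment k lam (k * (k + 1) * lam / 2) n := by
  match n with
  | 0 => simp [centralMoment, weightMoment_zero, ← Real.exp_add]
  | 1 => simp [centralMoment, weightMoment_mean_succ lam 0]
  | n + 2 =>
    rw [centralMoment, if_neg (by omega), if_neg (by omega)]
    exact tsum_mul_poissonK lam (summable_weightMoment lam _ (n + 2))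

end PoissonOrder

theorem poissonK_centralMoment_recurrence_general (k : ℕ) (lam : ℝ)
    (n : ℕ) (hn : 2 ≤ n) :
    centralMoment k lam n =
      lam * ∑ j ∈ Finset.Icc 2 n,
        (Nat.choose (n - 1) (j - 1) : ℝ) * (powerSum k j : ℝ) * centralMoment k lam (n - j) := by
  obtain ⟨m, rfl⟩ : ∃ m, n = m + 1 := ⟨n - 1, by omega⟩
  simp only [PoissonOrder.centralMoment_eq_exp_mul_weightMoment,
    PoissonOrder.weightMoment_mean_succ, Nat.add_sub_cancel, mul_sum]
  exact sum_congr rfl fun j _ => by ring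

/-- Recurrence for the central moments of the Poisson distribution of order `k`:
`M̃_n = λ · Σ_{j=2}^{n} C(n−1, j−1) · 𝓢_j(k) · M̃_{n−j}` for `n ≥ 2`. -/
theorem poissonK_centralMoment_recurrence (k : ℕ) (hk : 1 ≤ k) (lam : ℝ) (hlam : 0 < lam)
    (n : ℕ) (hn : 2 ≤ n) :
    centralMoment k lam n =
      lam * ∑ j ∈ Finset.Icc 2 n,
        (Nat.choose (n - 1) (j - 1) : ℝ) * (powerSum k j : ℝ) * centralMoment k lam (n - j) :=
  poissonK_centralMoment_recurrence_general k lam n hn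
end
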